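/- arXiv:1810.07402 — 5 statements merged into one kernel-verified Lean document; each statement's English description precedes it below -/
import Mathlib

section
/- Let γ ∈ C(Ω̄) and for d > 0 set λ₁(d) = sup{Re λ : λ ∈ σ(dK + γ)}, the spectral bound of the bounded linear operator φ ↦ dK[φ] + γφ on C(Ω̄). Assume λ₁(d) admits the characterizations λ₁(d) = sup over φ ∈ C(Ω̄) with φ > 0 on Ω̄ of inf_{x∈Ω} (dK[φ](x) + γ(x)φ(x))/φ(x), and likewise λ₁(d) = inf over φ ∈ C(Ω̄) with φ > 0 on Ω̄ of sup_{x∈Ω} (dK[φ](x) + γ(x)φ(x))/φ(x). Then lim_{d→0⁺} λ₁(d) = max_{x∈Ω̄} γ(x). -/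
open MeasureTheory Filter BoundedContinuousFunction

theorem stmt_4
    {n : ℕ} (hn : 1 ≤ n)
    (Ω : Set (Fin n → ℝ)) (hΩo : IsOpen Ω) (hΩb : Bornology.IsBounded Ω)
    (hΩc : IsConnected Ω)
    (k : (Fin n → ℝ) → (Fin n → ℝ) → ℝ)
    (hkc : Continuous (Function.uncurry k)) (hknn : ∀ x y, 0 ≤ k x y)
    (hkd : ∀ x, 0 < k x x)
    (hk1 : ∀ x, (∫ y, k x y) = 1) (hk2 : ∀ x, (∫ y, k y x) = 1)
    (γ : (Fin n → ℝ) → ℝ) (hγ : ContinuousOn γ (closure Ω))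
    (T : ℝ → ((↥(closure Ω) →ᵇ ℂ) →L[ℂ] (↥(closure Ω) →ᵇ ℂ)))
    (hT : ∀ d : ℝ, 0 < d → ∀ (φ : ((Fin n → ℝ) →ᵇ ℂ)) (x : ↥(closure Ω)),
      (T d) (φ.compContinuous (ContinuousMap.mk Subtype.val continuous_subtype_val)) x
        = (d : ℂ) * ((∫ y in Ω, (k x.1 y : ℂ) * φ y) - φ x.1)
          + ((γ x.1 : ℝ) : ℂ) * φ x.1)
    (lam : ℝ → ℝ)
    (hlam : ∀ d : ℝ, 0 < d → lam d = sSup (Complex.re '' spectrum ℂ (T d)))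
    (hchar₁ : ∀ d : ℝ, 0 < d → lam d = sSup {r : ℝ | ∃ φ : (Fin n → ℝ) → ℝ,
      ContinuousOn φ (closure Ω) ∧ (∀ x ∈ closure Ω, 0 < φ x) ∧
      r = sInf ((fun x => (d * ((∫ y in Ω, k x y * φ y) - φ x) + γ x * φ x) / φ x) '' Ω)})
    (hchar₂ : ∀ d : ℝ, 0 < d → lam d = sInf {r : ℝ | ∃ φ : (Fin n → ℝ) → ℝ,
      ContinuousOn φ (closure Ω) ∧ (∀ x ∈ closure Ω, 0 < φ x) ∧
      r = sSup ((fun x => (d * ((∫ y in Ω, k x y * φ y) - φ x) + γ x * φ x) / φ x) '' Ω)}) :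
    Tendsto lam (nhdsWithin 0 (Set.Ioi 0)) (nhds (sSup (γ '' closure Ω))) := by
  clear hn hkd hk2 hT hlam hchar₁
  set M : ℝ := sSup (γ '' closure Ω) with hM
  have Ωne : Ω.Nonempty := hΩc.nonempty
  have hΩm : MeasurableSet Ω := hΩo.measurableSet
  have hclne : (closure Ω).Nonempty := Ωne.closure
  have hcomp : IsCompact (closure Ω) := hΩb.isCompact_closure
  have hbddγ : BddAbove (γ '' closure Ω) := (hcomp.image_of_continuousOn hγ).bddAbove
  have hγle : ∀ x ∈ closure Ω, γ x ≤ M := fun x hx => le_csSup hbddγ ⟨x, hx, rfl⟩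
  -- integrability of k x
  have hkint : ∀ x, Integrable (k x) := fun x => integrable_of_integral_eq_one (hk1 x)
  have hkcx : ∀ x, Continuous (k x) := fun x =>
    hkc.comp (Continuous.prodMk_right x)
  have hm1 : ∀ x, (∫ y in Ω, k x y) ≤ 1 := by
    intro x
    rw [← hk1 x]
    exact setIntegral_le_integral (hkint x) (Filter.Eventually.of_forall (hknn x))
  -- the φ = 1 element of the characterization set
  have hone : ∀ d : ℝ, 0 < d →
      sSup ((fun x => (d * ((∫ y in Ω, k x y * (1:ℝ)) - 1) + γ x * 1) / 1) '' Ω) ∈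
      {r : ℝ | ∃ φ : (Fin n → ℝ) → ℝ,
        ContinuousOn φ (closure Ω) ∧ (∀ x ∈ closure Ω, 0 < φ x) ∧
        r = sSup ((fun x => (d * ((∫ y in Ω, k x y * φ y) - φ x) + γ x * φ x) / φ x) '' Ω)} := by
    intro d hd
    exact ⟨fun _ => (1:ℝ), continuousOn_const, fun x _ => one_pos, rfl⟩
  have honele : ∀ d : ℝ, 0 < d →
      sSup ((fun x => (d * ((∫ y in Ω, k x y * (1:ℝ)) - 1) + γ x * 1) / 1) '' Ω) ≤ M := by
    intro d hd
    apply csSup_le (Ωne.image _)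
    rintro r ⟨x, hx, rfl⟩
    simp only [mul_one, div_one]
    have h1 : d * ((∫ y in Ω, k x y) - 1) ≤ 0 := by
      apply mul_nonpos_of_nonneg_of_nonpos hd.le
      linarith [hm1 x]
    linarith [hγle x (subset_closure hx)]
  -- every element of the char₂ set is ≥ M - d
  have hlow : ∀ d : ℝ, 0 < d → ∀ r ∈ {r : ℝ | ∃ φ : (Fin n → ℝ) → ℝ,
      ContinuousOn φ (closure Ω) ∧ (∀ x ∈ closure Ω, 0 < φ x) ∧
      r = sSup ((fun x => (d * ((∫ y in Ω, k x y * φ y) - φ x) + γ x * φ x) / φ x) '' Ω)},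
      M - d ≤ r := by
    rintro d hd r ⟨φ, hφc, hφpos, rfl⟩
    set Q : (Fin n → ℝ) → ℝ :=
      fun x => (d * ((∫ y in Ω, k x y * φ y) - φ x) + γ x * φ x) / φ x with hQ
    obtain ⟨xB, hxBmem, hxBmax⟩ := hcomp.exists_isMaxOn hclne hφc
    obtain ⟨xη, hxηmem, hxηmin⟩ := hcomp.exists_isMinOn hclne hφc
    set B : ℝ := φ xB with hB
    set η : ℝ := φ xη with hη
    have hBpos : 0 < B := hφpos xB hxBmem
    have hηpos : 0 < η := hφpos xη hxηmem
    have hIint : ∀ x, IntegrableOn (fun y => k x y * φ y) Ω := by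
      intro x
      apply Integrable.mono' (((hkint x).restrict (s := Ω)).mul_const B)
      · exact (((hkcx x).continuousOn).mul (hφc.mono subset_closure)).aestronglyMeasurable hΩm
      · filter_upwards [ae_restrict_mem hΩm] with y hy
        have h1 : 0 < φ y := hφpos y (subset_closure hy)
        have h2 : φ y ≤ B := hxBmax (subset_closure hy)
        rw [Real.norm_eq_abs, abs_of_nonneg (mul_nonneg (hknn x y) h1.le)]
        exact mul_le_mul_of_nonneg_left h2 (hknn x y)
    have hInn : ∀ x, 0 ≤ ∫ y in Ω, k x y * φ y := by
      intro x
      apply setIntegral_nonneg hΩm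
      intro y hy
      exact mul_nonneg (hknn x y) (hφpos y (subset_closure hy)).le
    have hIle : ∀ x, (∫ y in Ω, k x y * φ y) ≤ B := by
      intro x
      calc (∫ y in Ω, k x y * φ y) ≤ ∫ y in Ω, k x y * B := by
            apply setIntegral_mono_on (hIint x) (((hkint x).restrict (s := Ω)).mul_const B) hΩm
            intro y hy
            exact mul_le_mul_of_nonneg_left (hxBmax (subset_closure hy)) (hknn x y)
        _ = (∫ y in Ω, k x y) * B := by rw [integral_mul_const]
        _ ≤ 1 * B := mul_le_mul_of_nonneg_right (hm1 x) hBpos.le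
        _ = B := one_mul B
    have hQbdd : BddAbove (Q '' Ω) := by
      refine ⟨M + d * B / η, ?_⟩
      rintro r ⟨x, hx, rfl⟩
      have hφx : 0 < φ x := hφpos x (subset_closure hx)
      rw [hQ, div_le_iff₀ hφx]
      have h1 : d * ((∫ y in Ω, k x y * φ y) - φ x) ≤ d * B := by
        have := hIle x
        nlinarith [hInn x]
      have h2 : γ x * φ x ≤ M * φ x :=
        mul_le_mul_of_nonneg_right (hγle x (subset_closure hx)) hφx.le
      have h3 : d * B ≤ d * B / η * φ x := by
        rw [div_mul_eq_mul_div, le_div_iff₀ hηpos]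
        have hφxη : η ≤ φ x := hxηmin (subset_closure hx)
        calc d * B * η ≤ d * B * φ x :=
              mul_le_mul_of_nonneg_left hφxη (mul_nonneg hd.le hBpos.le)
          _ = d * B * φ x := rfl
      linarith
    have hQge : ∀ x ∈ Ω, γ x - d ≤ Q x := by
      intro x hx
      have hφx : 0 < φ x := hφpos x (subset_closure hx)
      rw [hQ, le_div_iff₀ hφx]
      have := hInn x
      nlinarith
    have hkey : ∀ x ∈ Ω, γ x ≤ sSup (Q '' Ω) + d := by
      intro x hx
      have := le_csSup hQbdd (Set.mem_image_of_mem Q hx)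
      linarith [hQge x hx, this]
    -- extend to closure by continuity
    have hkey2 : ∀ x ∈ closure Ω, γ x ≤ sSup (Q '' Ω) + d := by
      intro x hx
      have h1 : γ x ∈ closure (γ '' Ω) := hγ.image_closure ⟨x, hx, rfl⟩
      have h2 : closure (γ '' Ω) ⊆ Set.Iic (sSup (Q '' Ω) + d) := by
        apply closure_minimal _ isClosed_Iic
        rintro v ⟨y, hy, rfl⟩
        exact hkey y hy
      exact h2 h1
    have : M ≤ sSup (Q '' Ω) + d := by
      apply csSup_le (hclne.image _)
      rintro v ⟨x, hx, rfl⟩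
      exact hkey2 x hx
    linarith
  -- bounds on lam
  have hub : ∀ d : ℝ, 0 < d → lam d ≤ M := by
    intro d hd
    rw [hchar₂ d hd]
    exact csInf_le_of_le ⟨M - d, fun r hr => hlow d hd r hr⟩ (hone d hd) (honele d hd)
  have hlb : ∀ d : ℝ, 0 < d → M - d ≤ lam d := by
    intro d hd
    rw [hchar₂ d hd]
    exact le_csInf ⟨_, hone d hd⟩ (hlow d hd)
  -- squeeze
  have h1 : Tendsto (fun d : ℝ => M - d) (nhdsWithin 0 (Set.Ioi 0)) (nhds M) := by
    have : Tendsto (fun d : ℝ => M - d) (nhds 0) (nhds (M - 0)) :=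
      tendsto_const_nhds.sub tendsto_id
    simpa using this.mono_left nhdsWithin_le_nhds
  have h2 : Tendsto (fun _ : ℝ => M) (nhdsWithin 0 (Set.Ioi 0)) (nhds M) := tendsto_const_nhds
  refine tendsto_of_tendsto_of_tendsto_of_le_of_le' h1 h2 ?_ ?_
  · filter_upwards [self_mem_nhdsWithin] with d hd
    exact hlb d hd
  · filter_upwards [self_mem_nhdsWithin] with d hd
    exact hub d hd
end

section
/- Assume (A2), (A3) and (A5) hold. Then the map v ↦ g(x, F₊(x,v), v) is strictly decreasing in v ≥ 0 for each x ∈ Ω̄. Moreover, for any fixed M₁ > 0 there exists σ₁ = σ₁(M₁) > 0 such that for all x ∈ Ω̄ and all 0 ≤ v < v₁ ≤ M₁: g(x, F₊(x,v₁), v₁) − g(x, F₊(x,v), v) ≤ −σ₁ (v₁ − v). -/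
open MeasureTheory Filter BoundedContinuousFunction

/-!
Write `h(v) = g(x, F₊(x,v), v)`. At every `v ≥ 0`, `h` has a right derivative: `g_v(x,0,v)` where
`F(x,v) ≤ 0` (if `F(x,v) = 0`, then `F_v < 0` makes `F` negative immediately to the right), and
`g_v + g_u F_v = (f_u g_v - f_v g_u) / f_u < 0` where `F(x,v) > 0`. Both are continuous and negative
on the compact set `Ω̄ × [0, max F] × [0, M₁]`, hence at most `-σ₁` there, and a bound on the right
derivative integrates to the one-sided Lipschitz estimate.
-/

open Set Topology Asymptotics Function

theorem isLittleO_sub_sub_partialDeriv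
    {G Gu : ℝ → ℝ → ℝ} {U V : Set ℝ} {φ : ℝ → ℝ} {w : ℝ}
    (hU : Convex ℝ U) (hφU : MapsTo φ V U) (hw : w ∈ V) (hφ : ContinuousWithinAt φ V w)
    (hGu : ∀ u ∈ U, ∀ z ∈ V, HasDerivWithinAt (G · z) (Gu u z) U u)
    (hGu_cont : ContinuousWithinAt (uncurry Gu) (U ×ˢ V) (φ w, w)) :
    (fun z => G (φ z) z - G (φ w) z - Gu (φ w) w * (φ z - φ w)) =o[𝓝[V] w]
      fun z => φ z - φ w := by
  rw [isLittleO_iff]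
  intro ε hε
  have hV : ∀ᶠ z in 𝓝[V] w, z ∈ V := self_mem_nhdsWithin
  have hseg : ∀ᶠ z in 𝓝[V] w, segment ℝ (φ w) (φ z) ⊆ U := by
    filter_upwards [hV] with z hz using hU.segment_subset (hφU hw) (hφU hz)
  have hclose : ∀ᶠ z in 𝓝[V] w, ∀ u ∈ segment ℝ (φ w) (φ z), ‖Gu u z - Gu (φ w) w‖ ≤ ε := by
    refine Eventually.segment_of_prod_nhdsWithin tendsto_const_nhds hφ ?_ hseg
    have hcont := hGu_cont.tendsto
    rw [nhdsWithin_prod_eq] at hcont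
    exact (hcont.comp (tendsto_snd.prodMk tendsto_fst)).eventually
      (Metric.closedBall_mem_nhds _ hε)
  filter_upwards [hV, hseg, hclose] with z hz hseg hclose
  have hmvt := Convex.norm_image_sub_le_of_norm_hasDerivWithin_le
    (f := fun u => G u z - Gu (φ w) w * u) (f' := fun u => Gu u z - Gu (φ w) w)
    (fun u hu => ((hGu u (hseg hu) z hz).mono hseg).sub ((hasDerivWithinAt_id u _).const_mul _)
      |>.congr_deriv (by ring)) hclose (convex_segment _ _) (left_mem_segment ℝ _ _)
    (right_mem_segment ℝ _ _)
  refine le_of_eq_of_le ?_ hmvt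
  ring_nf

theorem hasDerivWithinAt_apply_comp_of_partialDeriv
    {G Gu : ℝ → ℝ → ℝ} {U V : Set ℝ} {φ : ℝ → ℝ} {φ' Gv w : ℝ}
    (hU : Convex ℝ U) (hφU : MapsTo φ V U) (hw : w ∈ V)
    (hGu : ∀ u ∈ U, ∀ z ∈ V, HasDerivWithinAt (G · z) (Gu u z) U u)
    (hGu_cont : ContinuousWithinAt (uncurry Gu) (U ×ˢ V) (φ w, w))
    (hGv : HasDerivWithinAt (G (φ w)) Gv V w) (hφ : HasDerivWithinAt φ φ' V w) :
    HasDerivWithinAt (fun z => G (φ z) z) (Gv + Gu (φ w) w * φ') V w := by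
  have hpartial := isLittleO_sub_sub_partialDeriv hU hφU hw hφ.continuousWithinAt hGu
    hGu_cont
  rw [hasDerivWithinAt_iff_isLittleO]
  calc (fun z => G (φ z) z - G (φ w) w - (z - w) • (Gv + Gu (φ w) w * φ'))
      = fun z => (G (φ z) z - G (φ w) z - Gu (φ w) w * (φ z - φ w))
          + (G (φ w) z - G (φ w) w - (z - w) • Gv)
          + Gu (φ w) w * (φ z - φ w - (z - w) • φ') := by
        ext z; simp only [smul_eq_mul]; ring
    _ =o[𝓝[V] w] fun z => z - w :=
      ((hpartial.trans_isBigO hφ.hasFDerivWithinAt.isBigO_sub).add hGv.isLittleO).add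
        (hφ.isLittleO.const_mul_left _)

theorem HasDerivWithinAt.max_zero_Ici {φ : ℝ → ℝ} {φ' w : ℝ}
    (hφ : HasDerivWithinAt φ φ' (Ici w) w) (hzero : φ w = 0 → φ' < 0) :
    HasDerivWithinAt (fun z => max (φ z) 0) (if 0 < φ w then φ' else 0) (Ici w) w := by
  rcases lt_or_ge 0 (φ w) with hpos | hnonpos
  · rw [if_pos hpos]
    have hev : ∀ᶠ z in 𝓝[Ici w] w, 0 < φ z := hφ.continuousWithinAt.eventually_const_lt hpos
    exact hφ.congr_of_eventuallyEq (hev.mono fun z hz => max_eq_left hz.le) (max_eq_left hpos.le)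
  rw [if_neg hnonpos.not_gt]
  have hev : ∀ᶠ z in 𝓝[Ici w] w, φ z ≤ 0 := by
    rcases hnonpos.lt_or_eq with hneg | hw0
    · exact (hφ.continuousWithinAt.eventually_lt_const hneg).mono fun _ => le_of_lt
    have hslope : ∀ᶠ z in 𝓝[Ici w \ {w}] w, slope φ w z < 0 :=
      (hasDerivWithinAt_iff_tendsto_slope.1 hφ).eventually_lt_const (hzero hw0)
    rw [eventually_nhdsWithin_iff] at hslope ⊢
    filter_upwards [hslope] with z hz hwz
    rcases (mem_Ici.1 hwz).eq_or_lt with rfl | hlt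
    · exact hw0.le
    · have h := hz ⟨hwz, hlt.ne'⟩
      rw [slope_def_field, hw0, sub_zero] at h
      exact (neg_of_div_neg_left h (sub_pos.2 hlt).le).le
  exact (hasDerivWithinAt_const w _ 0).congr_of_eventuallyEq
    (hev.mono fun z hz => max_eq_right hz) (max_eq_right hnonpos)

theorem sub_le_mul_sub_of_hasDerivWithinAt_Ici_le {h h' : ℝ → ℝ} {a b C : ℝ} (hab : a ≤ b)
    (hc : ContinuousOn h (Icc a b)) (hd : ∀ w ∈ Ico a b, HasDerivWithinAt h (h' w) (Ici w) w)
    (hbound : ∀ w ∈ Ico a b, h' w ≤ C) : h b - h a ≤ C * (b - a) := by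
  have hline : ∀ t, HasDerivAt (fun t => h a + C * (t - a)) C t := fun t => by
    simpa using ((hasDerivAt_id t).sub_const a).const_mul C |>.const_add (h a)
  have := image_le_of_deriv_right_le_deriv_boundary hc hd (by simp) (by fun_prop)
    (fun t _ => (hline t).hasDerivWithinAt) hbound ⟨hab, le_rfl⟩
  linarith

theorem apply_max_zero_sub_le {G Gu Gv : ℝ → ℝ → ℝ} {φ φ' : ℝ → ℝ} {a b σ : ℝ}
    (hGu : ∀ u ∈ Ici (0:ℝ), ∀ z ∈ Ici (0:ℝ), HasDerivWithinAt (G · z) (Gu u z) (Ici 0) u)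
    (hGv : ∀ u ∈ Ici (0:ℝ), ∀ z ∈ Ici (0:ℝ), HasDerivWithinAt (G u ·) (Gv u z) (Ici 0) z)
    (hG_cont : ContinuousOn (uncurry G) (Ici 0 ×ˢ Ici 0))
    (hGu_cont : ContinuousOn (uncurry Gu) (Ici 0 ×ˢ Ici 0))
    (hφ : ∀ z ∈ Ici (0:ℝ), HasDerivWithinAt φ (φ' z) (Ici 0) z)
    (hφ_zero : ∀ z ∈ Ici (0:ℝ), φ z = 0 → φ' z < 0) (ha : 0 ≤ a) (hab : a ≤ b)
    (hbound : ∀ w ∈ Ico a b,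
      Gv 0 w ≤ -σ ∧ (0 < φ w → Gv (φ w) w + Gu (φ w) w * φ' w ≤ -σ)) :
    G (max (φ b) 0) b - G (max (φ a) 0) a ≤ -σ * (b - a) := by
  have hsub : Icc a b ⊆ Ici 0 := fun z hz => ha.trans hz.1
  have hmax : ∀ z, max (φ z) 0 ∈ Ici (0:ℝ) := fun z => mem_Ici.2 (le_max_right _ _)
  refine sub_le_mul_sub_of_hasDerivWithinAt_Ici_le (h := fun z => G (max (φ z) 0) z)
    (h' := fun w => Gv (max (φ w) 0) w + Gu (max (φ w) 0) w * if 0 < φ w then φ' w else 0)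
    hab ?_ (fun w hw => ?_) (fun w hw => ?_)
  · have hφc : ContinuousOn φ (Icc a b) := fun z hz =>
      (hφ z (hsub hz)).continuousWithinAt.mono hsub
    exact hG_cont.comp ((hφc.sup continuousOn_const).prodMk continuousOn_id)
      fun z hz => show (max (φ z) 0, z) ∈ Ici 0 ×ˢ Ici 0 from ⟨hmax z, hsub hz⟩
  · have hw : 0 ≤ w := ha.trans hw.1
    have hIci : Ici w ⊆ Ici 0 := Ici_subset_Ici.2 hw
    exact hasDerivWithinAt_apply_comp_of_partialDeriv (convex_Ici 0) (fun z _ => hmax z)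
      self_mem_Ici (fun u hu z hz => hGu u hu z (hIci hz))
      ((hGu_cont (max (φ w) 0, w) ⟨hmax w, hw⟩).mono (prod_mono subset_rfl hIci))
      ((hGv _ (hmax w) w hw).mono hIci)
      (((hφ w hw).mono hIci).max_zero_Ici (hφ_zero w hw))
  · by_cases hpos : 0 < φ w
    · simpa [hpos, max_eq_left hpos.le] using (hbound w hw).2 hpos
    · simpa [hpos, max_eq_right (not_lt.1 hpos)] using (hbound w hw).1

theorem add_mul_neg_div_lt_zero {a b c d : ℝ} (hd : d < 0) (h : c * b < d * a) :
    a + b * (-c / d) < 0 := by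
  have : a + b * (-c / d) = (d * a - c * b) / d := by
    rw [eq_div_iff hd.ne, add_mul, mul_assoc, div_mul_cancel₀ _ hd.ne]; ring
  rw [this]
  exact div_neg_of_pos_of_neg (by linarith) hd

theorem IsCompact.exists_pos_forall_le_neg_of_partialDeriv {X : Type*} [TopologicalSpace X]
    {K : Set X} (hK : IsCompact K) {fu fv gu gv : X → ℝ} (hfu : ContinuousOn fu K)
    (hfv : ContinuousOn fv K) (hgu : ContinuousOn gu K) (hgv : ContinuousOn gv K)
    (hfu_neg : ∀ q ∈ K, fu q < 0) (hgv_neg : ∀ q ∈ K, gv q < 0)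
    (hdet : ∀ q ∈ K, fv q * gu q < fu q * gv q) :
    ∃ σ > 0, ∀ q ∈ K, gv q ≤ -σ ∧ gv q + gu q * (-fv q / fu q) ≤ -σ := by
  obtain ⟨σ, hσ, hσK⟩ := hK.exists_forall_le' (a := 0)
    (hgv.sup (hgv.add (hgu.mul (hfv.neg.div hfu fun q hq => (hfu_neg q hq).ne)))).neg
    fun q hq => neg_pos.2 <| max_lt (hgv_neg q hq)
      (add_mul_neg_div_lt_zero (hfu_neg q hq) (hdet q hq))
  exact ⟨σ, hσ, fun q hq => max_le_iff.1 (le_neg.1 (hσK q hq))⟩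

theorem stmt_8_general
    {n : ℕ}
    (Ω : Set (Fin n → ℝ)) (hΩb : Bornology.IsBounded Ω)
    (g fu fv gu gv : (Fin n → ℝ) → ℝ → ℝ → ℝ)
    (hdgu : ∀ x ∈ closure Ω, ∀ u ∈ Set.Ici (0:ℝ), ∀ v ∈ Set.Ici (0:ℝ),
      HasDerivWithinAt (fun s => g x s v) (gu x u v) (Set.Ici 0) u)
    (hdgv : ∀ x ∈ closure Ω, ∀ u ∈ Set.Ici (0:ℝ), ∀ v ∈ Set.Ici (0:ℝ),
      HasDerivWithinAt (fun s => g x u s) (gv x u v) (Set.Ici 0) v)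
    (hgcont : ContinuousOn (fun q : (Fin n → ℝ) × ℝ × ℝ => g q.1 q.2.1 q.2.2)
      ((closure Ω) ×ˢ (Set.Ici 0 ×ˢ Set.Ici 0)))
    (hfucont : ContinuousOn (fun q : (Fin n → ℝ) × ℝ × ℝ => fu q.1 q.2.1 q.2.2)
      ((closure Ω) ×ˢ (Set.Ici 0 ×ˢ Set.Ici 0)))
    (hfvcont : ContinuousOn (fun q : (Fin n → ℝ) × ℝ × ℝ => fv q.1 q.2.1 q.2.2)
      ((closure Ω) ×ˢ (Set.Ici 0 ×ˢ Set.Ici 0)))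
    (hgucont : ContinuousOn (fun q : (Fin n → ℝ) × ℝ × ℝ => gu q.1 q.2.1 q.2.2)
      ((closure Ω) ×ˢ (Set.Ici 0 ×ˢ Set.Ici 0)))
    (hgvcont : ContinuousOn (fun q : (Fin n → ℝ) × ℝ × ℝ => gv q.1 q.2.1 q.2.2)
      ((closure Ω) ×ˢ (Set.Ici 0 ×ˢ Set.Ici 0)))
    (hA2 : ∀ x ∈ closure Ω, ∀ u ∈ Set.Ici (0:ℝ), ∀ v ∈ Set.Ici (0:ℝ),
      fu x u v < 0 ∧ gv x u v < 0)
    (hA3 : ∀ x ∈ closure Ω, ∀ u ∈ Set.Ici (0:ℝ), ∀ v ∈ Set.Ici (0:ℝ),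
      fv x u v < 0 ∧ gu x u v < 0)
    (hA5 : ∀ x ∈ closure Ω, ∀ u ∈ Set.Ici (0:ℝ), ∀ v ∈ Set.Ici (0:ℝ),
      fv x u v * gu x u v < fu x u v * gv x u v)
    (F : (Fin n → ℝ) → ℝ → ℝ)
    (hFcont : ContinuousOn (fun q : (Fin n → ℝ) × ℝ => F q.1 q.2) ((closure Ω) ×ˢ Set.Ici 0))
    (hFderiv : ∀ x ∈ closure Ω, ∀ v ∈ Set.Ici (0:ℝ),
      HasDerivWithinAt (fun s => F x s) (-(fv x (F x v) v) / fu x (F x v) v) (Set.Ici 0) v)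
 :
    (∀ x ∈ closure Ω, StrictAntiOn (fun w => g x (max (F x w) 0) w) (Set.Ici 0)) ∧
    (∀ M₁ : ℝ, 0 < M₁ → ∃ σ₁ : ℝ, 0 < σ₁ ∧ ∀ x ∈ closure Ω, ∀ v v₁ : ℝ,
      0 ≤ v → v < v₁ → v₁ ≤ M₁ →
      g x (max (F x v₁) 0) v₁ - g x (max (F x v) 0) v ≤ -σ₁ * (v₁ - v)) := by
  have hF_zero : ∀ x ∈ closure Ω, ∀ w ∈ Ici (0:ℝ), F x w = 0 →
      -fv x (F x w) w / fu x (F x w) w < 0 := fun x hx w hw hzero => by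
    have hu : F x w ∈ Ici (0:ℝ) := hzero.ge
    exact div_neg_of_pos_of_neg (neg_pos.2 (hA3 x hx _ hu w hw).1) (hA2 x hx _ hu w hw).1
  have hquant : ∀ M₁ : ℝ, 0 < M₁ → ∃ σ₁ : ℝ, 0 < σ₁ ∧ ∀ x ∈ closure Ω, ∀ v v₁ : ℝ,
      0 ≤ v → v < v₁ → v₁ ≤ M₁ →
      g x (max (F x v₁) 0) v₁ - g x (max (F x v) 0) v ≤ -σ₁ * (v₁ - v) := by
    intro M₁ _
    have hΩc := hΩb.isCompact_closure
    obtain ⟨C, hC⟩ := (hΩc.prod isCompact_Icc).bddAbove_image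
      (hFcont.mono (prod_mono subset_rfl Icc_subset_Ici_self))
    set K := closure Ω ×ˢ (Icc 0 (max C 0) ×ˢ Icc 0 M₁)
    have hKQ : K ⊆ closure Ω ×ˢ (Ici 0 ×ˢ Ici 0) :=
      prod_mono subset_rfl (prod_mono Icc_subset_Ici_self Icc_subset_Ici_self)
    obtain ⟨σ, hσ, hσK⟩ := IsCompact.exists_pos_forall_le_neg_of_partialDeriv
      (hΩc.prod (isCompact_Icc.prod isCompact_Icc))
      (hfucont.mono hKQ) (hfvcont.mono hKQ) (hgucont.mono hKQ) (hgvcont.mono hKQ)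
      (fun _ hq => (hA2 _ hq.1 _ hq.2.1.1 _ hq.2.2.1).1)
      (fun _ hq => (hA2 _ hq.1 _ hq.2.1.1 _ hq.2.2.1).2)
      (fun _ hq => hA5 _ hq.1 _ hq.2.1.1 _ hq.2.2.1)
    refine ⟨σ, hσ, fun x hx v v₁ hv hvv₁ hv₁ => apply_max_zero_sub_le (hdgu x hx) (hdgv x hx)
      (hgcont.uncurry_left (f := fun x (p : ℝ × ℝ) => g x p.1 p.2) x hx)
      (hgucont.uncurry_left (f := fun x (p : ℝ × ℝ) => gu x p.1 p.2) x hx)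
      (hFderiv x hx) (hF_zero x hx) hv hvv₁.le fun w hw => ?_⟩
    have hw : w ∈ Icc 0 M₁ := ⟨hv.trans hw.1, hw.2.le.trans hv₁⟩
    refine ⟨(hσK (x, 0, w) ⟨hx, ⟨le_rfl, le_max_right _ _⟩, hw⟩).1, fun hpos => ?_⟩
    exact (hσK (x, F x w, w) ⟨hx, ⟨hpos.le,
      (hC ⟨(x, w), ⟨hx, hw⟩, rfl⟩).trans (le_max_left _ _)⟩, hw⟩).2
  refine ⟨fun x hx a ha b _ hab => ?_, hquant⟩
  obtain ⟨σ, hσ, hσb⟩ := hquant b (lt_of_le_of_lt ha hab)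
  have := hσb x hx a b ha hab le_rfl
  linarith [mul_pos hσ (sub_pos.2 hab)]

theorem stmt_8
    {n : ℕ} (hn : 1 ≤ n)
    (Ω : Set (Fin n → ℝ)) (hΩo : IsOpen Ω) (hΩb : Bornology.IsBounded Ω)
    (hΩc : IsConnected Ω)
    (f g fu fv gu gv : (Fin n → ℝ) → ℝ → ℝ → ℝ)
    (hdfu : ∀ x ∈ closure Ω, ∀ u ∈ Set.Ici (0:ℝ), ∀ v ∈ Set.Ici (0:ℝ),
      HasDerivWithinAt (fun s => f x s v) (fu x u v) (Set.Ici 0) u)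
    (hdfv : ∀ x ∈ closure Ω, ∀ u ∈ Set.Ici (0:ℝ), ∀ v ∈ Set.Ici (0:ℝ),
      HasDerivWithinAt (fun s => f x u s) (fv x u v) (Set.Ici 0) v)
    (hdgu : ∀ x ∈ closure Ω, ∀ u ∈ Set.Ici (0:ℝ), ∀ v ∈ Set.Ici (0:ℝ),
      HasDerivWithinAt (fun s => g x s v) (gu x u v) (Set.Ici 0) u)
    (hdgv : ∀ x ∈ closure Ω, ∀ u ∈ Set.Ici (0:ℝ), ∀ v ∈ Set.Ici (0:ℝ),
      HasDerivWithinAt (fun s => g x u s) (gv x u v) (Set.Ici 0) v)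
    (hfcont : ContinuousOn (fun q : (Fin n → ℝ) × ℝ × ℝ => f q.1 q.2.1 q.2.2)
      ((closure Ω) ×ˢ (Set.Ici 0 ×ˢ Set.Ici 0)))
    (hgcont : ContinuousOn (fun q : (Fin n → ℝ) × ℝ × ℝ => g q.1 q.2.1 q.2.2)
      ((closure Ω) ×ˢ (Set.Ici 0 ×ˢ Set.Ici 0)))
    (hfucont : ContinuousOn (fun q : (Fin n → ℝ) × ℝ × ℝ => fu q.1 q.2.1 q.2.2)
      ((closure Ω) ×ˢ (Set.Ici 0 ×ˢ Set.Ici 0)))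
    (hfvcont : ContinuousOn (fun q : (Fin n → ℝ) × ℝ × ℝ => fv q.1 q.2.1 q.2.2)
      ((closure Ω) ×ˢ (Set.Ici 0 ×ˢ Set.Ici 0)))
    (hgucont : ContinuousOn (fun q : (Fin n → ℝ) × ℝ × ℝ => gu q.1 q.2.1 q.2.2)
      ((closure Ω) ×ˢ (Set.Ici 0 ×ˢ Set.Ici 0)))
    (hgvcont : ContinuousOn (fun q : (Fin n → ℝ) × ℝ × ℝ => gv q.1 q.2.1 q.2.2)
      ((closure Ω) ×ˢ (Set.Ici 0 ×ˢ Set.Ici 0)))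
    (hA2 : ∀ x ∈ closure Ω, ∀ u ∈ Set.Ici (0:ℝ), ∀ v ∈ Set.Ici (0:ℝ),
      fu x u v < 0 ∧ gv x u v < 0)
    (hA3 : ∀ x ∈ closure Ω, ∀ u ∈ Set.Ici (0:ℝ), ∀ v ∈ Set.Ici (0:ℝ),
      fv x u v < 0 ∧ gu x u v < 0)
    (hA5 : ∀ x ∈ closure Ω, ∀ u ∈ Set.Ici (0:ℝ), ∀ v ∈ Set.Ici (0:ℝ),
      fv x u v * gu x u v < fu x u v * gv x u v)
    (F : (Fin n → ℝ) → ℝ → ℝ)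
    (hFcont : ContinuousOn (fun q : (Fin n → ℝ) × ℝ => F q.1 q.2) ((closure Ω) ×ˢ Set.Ici 0))
    (hF : ∀ x ∈ closure Ω, ∀ v ∈ Set.Ici (0:ℝ), f x (F x v) v = 0)
    (hFderiv : ∀ x ∈ closure Ω, ∀ v ∈ Set.Ici (0:ℝ),
      HasDerivWithinAt (fun s => F x s) (-(fv x (F x v) v) / fu x (F x v) v) (Set.Ici 0) v)
 :
    (∀ x ∈ closure Ω, StrictAntiOn (fun w => g x (max (F x w) 0) w) (Set.Ici 0)) ∧
    (∀ M₁ : ℝ, 0 < M₁ → ∃ σ₁ : ℝ, 0 < σ₁ ∧ ∀ x ∈ closure Ω, ∀ v v₁ : ℝ,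
      0 ≤ v → v < v₁ → v₁ ≤ M₁ →
      g x (max (F x v₁) 0) v₁ - g x (max (F x v) 0) v ≤ -σ₁ * (v₁ - v)) :=
  stmt_8_general Ω hΩb g fu fv gu gv hdgu hdgv hgcont hfucont hfvcont hgucont hgvcont hA2 hA3 hA5 F
    hFcont hFderiv
end

section
/- Assume (A0)–(A3) and (A5) hold. Suppose v*, v ∈ C(Ω̄) are nonnegative, v* ≢ 0, v ≢ 0, and satisfy DP[v](x) + v(x) g(x, F₊(x,v(x)), v(x)) ≥ 0 for all x ∈ Ω̄ and DP[v*](x) + v*(x) g(x, F₊(x,v*(x)), v*(x)) ≤ 0 for all x ∈ Ω̄, where D > 0. Then either v* > v everywhere on Ω̄, or v* = v on Ω̄. -/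
/-!
Write `G x s = g x (F₊ x s) s`. Where `F ≥ 0`, the mean value theorem in each variable along
the curve `u = F x v`, together with `f_u < 0` and the positive Jacobian `f_u g_v - f_v g_u`,
makes `s ↦ G x s` locally strictly decreasing to the right; where `F ≤ 0` it is `g x 0 s`,
decreasing since `g_v < 0`. Real induction then makes `G x` strictly decreasing on `[0, ∞)`.

By the strong maximum principle for `P`, the supersolution `v*` is positive. Let
`M = max (v / v*)`. If `v < v*` fails somewhere then `M ≥ 1`, and `w = M v* - v ≥ 0` vanishes at
the maximiser; at a zero of `w` the two inequalities combine, through the monotonicity of `G`,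
into `∫ p(x, ·) w ≤ 0`. Hence `w ≡ 0`, and strict monotonicity of `G` at a touching point
forces `M = 1`.
-/

open MeasureTheory Filter Set Topology Metric

lemma exists_sub_eq_mul_of_hasDerivWithinAt_Ici {h h' : ℝ → ℝ} {c a b : ℝ}
    (hd : ∀ u ∈ Ici c, HasDerivWithinAt h (h' u) (Ici c) u) (ha : c ≤ a) (hab : a < b) :
    ∃ ξ ∈ Ioo a b, h b - h a = h' ξ * (b - a) := by
  have hsub : Icc a b ⊆ Ici c := fun y hy => ha.trans hy.1
  obtain ⟨ξ, hξ, hslope⟩ := exists_hasDerivAt_eq_slope h h' hab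
    (fun u hu => (hd u (hsub hu)).continuousWithinAt.mono hsub)
    fun u hu => (hd u (ha.trans hu.1.le)).hasDerivAt (Ici_mem_nhds (ha.trans_lt hu.1))
  exact ⟨ξ, hξ, by rw [hslope, div_mul_cancel₀ _ (sub_ne_zero.2 hab.ne')]⟩

lemma strictAntiOn_Ici_of_hasDerivWithinAt_neg {h h' : ℝ → ℝ} {c : ℝ}
    (hd : ∀ u ∈ Ici c, HasDerivWithinAt h (h' u) (Ici c) u) (hneg : ∀ u ∈ Ici c, h' u < 0) :
    StrictAntiOn h (Ici c) := by
  intro a ha b _ hab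
  obtain ⟨ξ, hξ, heq⟩ := exists_sub_eq_mul_of_hasDerivWithinAt_Ici hd ha hab
  have := mul_neg_of_neg_of_pos (hneg ξ (mem_Ici.2 (ha.trans hξ.1.le))) (sub_pos.2 hab)
  linarith

lemma exists_sub_eq_of_hasDerivWithinAt_quadrant {h h₁ h₂ : ℝ → ℝ → ℝ}
    (hd₁ : ∀ u ≥ (0:ℝ), ∀ v ≥ (0:ℝ), HasDerivWithinAt (fun r => h r v) (h₁ u v) (Ici 0) u)
    (hd₂ : ∀ u ≥ (0:ℝ), ∀ v ≥ (0:ℝ), HasDerivWithinAt (fun r => h u r) (h₂ u v) (Ici 0) v)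
    {u' u s t : ℝ} (hu' : 0 ≤ u') (hu'u : u' < u) (hs : 0 ≤ s) (hst : s < t) :
    ∃ ξ ∈ Ioo u' u, ∃ η ∈ Ioo s t, h u' t - h u s = h₂ u η * (t - s) - h₁ ξ t * (u - u') := by
  obtain ⟨ξ, hξ, h_u⟩ := exists_sub_eq_mul_of_hasDerivWithinAt_Ici
    (hd₁ · · t (hs.trans hst.le)) hu' hu'u
  obtain ⟨η, hη, h_v⟩ := exists_sub_eq_mul_of_hasDerivWithinAt_Ici
    (hd₂ u (hu'.trans hu'u.le)) hs hst
  exact ⟨ξ, hξ, η, hη, by linarith⟩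

lemma strictAntiOn_Ici_of_eventually_lt {φ : ℝ → ℝ} {a : ℝ} (hφ : ContinuousOn φ (Ici a))
    (hloc : ∀ x ∈ Ici a, ∀ᶠ t in 𝓝[>] x, φ t < φ x) : StrictAntiOn φ (Ici a) := by
  intro x hx y _ hxy
  obtain ⟨t, hxt, hty⟩ := ((hloc x hx).and (Ioo_mem_nhdsGT hxy)).exists
  have hIcc : Icc t y ⊆ φ ⁻¹' Iic (φ t) := by
    refine IsClosed.Icc_subset_of_forall_mem_nhdsWithin ?_ (le_refl (φ t)) fun z hz => ?_
    · rw [inter_comm]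
      exact (hφ.mono fun z hz => mem_Ici.2 ((mem_Ici.1 hx).trans (hty.1.le.trans hz.1))
        ).preimage_isClosed_of_isClosed isClosed_Icc isClosed_Iic
    · filter_upwards [hloc z (mem_Ici.2 ((mem_Ici.1 hx).trans (hty.1.le.trans hz.2.1)))]
        with r hr using hr.le.trans hz.1
  exact (hIcc ⟨hty.2.le, le_rfl⟩).trans_lt hxt

lemma exists_ball_forall_mul_sub_mul_pos {X : Type*} [PseudoMetricSpace X] {a b c d : X → ℝ}
    {K : Set X} {P : X} (ha : ContinuousWithinAt a K P) (hb : ContinuousWithinAt b K P)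
    (hc : ContinuousWithinAt c K P) (hd : ContinuousWithinAt d K P)
    (hP : 0 < a P * b P - c P * d P) :
    ∃ δ > 0, ∀ q₁ ∈ ball P δ ∩ K, ∀ q₂ ∈ ball P δ ∩ K, ∀ q₃ ∈ ball P δ ∩ K,
      ∀ q₄ ∈ ball P δ ∩ K, 0 < a q₁ * b q₂ - c q₃ * d q₄ := by
  obtain ⟨ε, hε, hdet⟩ := Metric.eventually_nhds_iff.1 <|
    ((by fun_prop : Continuous fun z : ℝ × ℝ × ℝ × ℝ => z.1 * z.2.1 - z.2.2.1 * z.2.2.2).tendsto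
      (a P, b P, c P, d P)).eventually_const_lt hP
  have hU : ∀ᶠ q in 𝓝[K] P, a q ∈ ball (a P) ε ∧ b q ∈ ball (b P) ε ∧ c q ∈ ball (c P) ε ∧
      d q ∈ ball (d P) ε :=
    (ha.eventually (ball_mem_nhds _ hε)).and <| (hb.eventually (ball_mem_nhds _ hε)).and <|
      (hc.eventually (ball_mem_nhds _ hε)).and (hd.eventually (ball_mem_nhds _ hε))
  obtain ⟨δ, hδ, hδU⟩ := Metric.mem_nhdsWithin_iff.1 hU
  refine ⟨δ, hδ, fun q₁ h₁ q₂ h₂ q₃ h₃ q₄ h₄ => hdet (y := (a q₁, b q₂, c q₃, d q₄)) ?_⟩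
  simp only [Prod.dist_eq, max_lt_iff]
  exact ⟨(hδU h₁).1, (hδU h₂).2.1, (hδU h₃).2.2.1, (hδU h₄).2.2.2⟩

section Reaction

variable {f g fu fv gu gv : ℝ → ℝ → ℝ} {F : ℝ → ℝ}

lemma root_lt_root
    (hdfu : ∀ u ≥ (0:ℝ), ∀ v ≥ (0:ℝ), HasDerivWithinAt (fun s => f s v) (fu u v) (Ici 0) u)
    (hdfv : ∀ u ≥ (0:ℝ), ∀ v ≥ (0:ℝ), HasDerivWithinAt (fun s => f u s) (fv u v) (Ici 0) v)
    (hfu : ∀ u ≥ (0:ℝ), ∀ v ≥ (0:ℝ), fu u v < 0)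
    (hfv : ∀ u ≥ (0:ℝ), ∀ v ≥ (0:ℝ), fv u v < 0)
    (hF : ∀ v ≥ (0:ℝ), f (F v) v = 0) {s t : ℝ} (hs : 0 ≤ s) (hst : s < t)
    (hFs : 0 ≤ F s) : F t < F s := by
  by_contra! hle
  have hFt : 0 ≤ F t := hFs.trans hle
  have h_v : f (F t) t < f (F t) s :=
    strictAntiOn_Ici_of_hasDerivWithinAt_neg (hdfv _ hFt) (hfv _ hFt) hs (hs.trans hst.le) hst
  have h_u : f (F t) s ≤ f (F s) s :=
    (strictAntiOn_Ici_of_hasDerivWithinAt_neg (hdfu · · s hs) (hfu · · s hs)).antitoneOn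
      hFs hFt hle
  linarith [hF s hs, hF t (hs.trans hst.le)]

lemma eventually_apply_root_lt
    (hdfu : ∀ u ≥ (0:ℝ), ∀ v ≥ (0:ℝ), HasDerivWithinAt (fun s => f s v) (fu u v) (Ici 0) u)
    (hdfv : ∀ u ≥ (0:ℝ), ∀ v ≥ (0:ℝ), HasDerivWithinAt (fun s => f u s) (fv u v) (Ici 0) v)
    (hdgu : ∀ u ≥ (0:ℝ), ∀ v ≥ (0:ℝ), HasDerivWithinAt (fun s => g s v) (gu u v) (Ici 0) u)
    (hdgv : ∀ u ≥ (0:ℝ), ∀ v ≥ (0:ℝ), HasDerivWithinAt (fun s => g u s) (gv u v) (Ici 0) v)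
    (hfu : ∀ u ≥ (0:ℝ), ∀ v ≥ (0:ℝ), fu u v < 0)
    (hfv : ∀ u ≥ (0:ℝ), ∀ v ≥ (0:ℝ), fv u v < 0)
    (hdet : ∀ u ≥ (0:ℝ), ∀ v ≥ (0:ℝ), fv u v * gu u v < fu u v * gv u v)
    (hfuc : ContinuousOn (fun q : ℝ × ℝ => fu q.1 q.2) (Ici 0 ×ˢ Ici 0))
    (hfvc : ContinuousOn (fun q : ℝ × ℝ => fv q.1 q.2) (Ici 0 ×ˢ Ici 0))
    (hguc : ContinuousOn (fun q : ℝ × ℝ => gu q.1 q.2) (Ici 0 ×ˢ Ici 0))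
    (hgvc : ContinuousOn (fun q : ℝ × ℝ => gv q.1 q.2) (Ici 0 ×ˢ Ici 0))
    (hF : ∀ v ≥ (0:ℝ), f (F v) v = 0) {s : ℝ} (hs : 0 ≤ s)
    (hFc : Tendsto F (𝓝[>] s) (𝓝 (F s))) (hFs : 0 < F s) :
    ∀ᶠ t in 𝓝[>] s, g (F t) t < g (F s) s := by
  have hP : (F s, s) ∈ Ici (0:ℝ) ×ˢ Ici (0:ℝ) := ⟨hFs.le, hs⟩
  obtain ⟨δ, hδ, hpos⟩ := exists_ball_forall_mul_sub_mul_pos (hfuc _ hP) (hgvc _ hP) (hfvc _ hP)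
    (hguc _ hP) (sub_pos.2 (hdet _ hFs.le _ hs))
  filter_upwards [Ioo_mem_nhdsGT (lt_add_of_pos_right s hδ), hFc.eventually (Ioi_mem_nhds hFs),
    hFc.eventually (ball_mem_nhds _ hδ)] with t ⟨hst, htδ⟩ hFt hFtδ
  have hFts : F t < F s := root_lt_root hdfu hdfv hfu hfv hF hs hst hFs.le
  have hbox : ∀ u ∈ Icc (F t) (F s), ∀ r ∈ Icc s t,
      (u, r) ∈ ball (F s, s) δ ∩ Ici (0:ℝ) ×ˢ Ici (0:ℝ) := by
    intro u hu r hr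
    rw [Real.dist_eq, abs_lt] at hFtδ
    refine ⟨?_, hFt.le.trans hu.1, hs.trans hr.1⟩
    simp only [mem_ball, Prod.dist_eq, Real.dist_eq, max_lt_iff, abs_lt]
    constructor <;> constructor <;> linarith [hu.1, hu.2, hr.1, hr.2]
  obtain ⟨ξ₁, hξ₁, η₁, hη₁, hf⟩ :=
    exists_sub_eq_of_hasDerivWithinAt_quadrant hdfu hdfv hFt.le hFts hs hst
  obtain ⟨ξ₂, hξ₂, η₂, hη₂, hg⟩ :=
    exists_sub_eq_of_hasDerivWithinAt_quadrant hdgu hdgv hFt.le hFts hs hst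
  rw [hF t (hs.trans hst.le), hF s hs, sub_zero] at hf
  have hJ := hpos (ξ₁, t) (hbox _ ⟨hξ₁.1.le, hξ₁.2.le⟩ _ ⟨hst.le, le_rfl⟩)
    (F s, η₂) (hbox _ ⟨hFts.le, le_rfl⟩ _ ⟨hη₂.1.le, hη₂.2.le⟩)
    (F s, η₁) (hbox _ ⟨hFts.le, le_rfl⟩ _ ⟨hη₁.1.le, hη₁.2.le⟩)
    (ξ₂, t) (hbox _ ⟨hξ₂.1.le, hξ₂.2.le⟩ _ ⟨hst.le, le_rfl⟩)
  -- eliminate `F s - F t` between the increment of `f` (which vanishes) and that of `g`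
  have hkey : fu ξ₁ t * (g (F t) t - g (F s) s)
      = (t - s) * (fu ξ₁ t * gv (F s) η₂ - fv (F s) η₁ * gu ξ₂ t) := by
    linear_combination fu ξ₁ t * hg - gu ξ₂ t * hf
  have hfu' : fu ξ₁ t ≤ 0 := (hfu _ (hFt.le.trans hξ₁.1.le) t (hs.trans hst.le)).le
  exact sub_neg.1 (neg_of_mul_pos_right (hkey ▸ mul_pos (sub_pos.2 hst) hJ) hfu')

lemma eventually_apply_posPart_root_lt
    (hdfu : ∀ u ≥ (0:ℝ), ∀ v ≥ (0:ℝ), HasDerivWithinAt (fun s => f s v) (fu u v) (Ici 0) u)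
    (hdfv : ∀ u ≥ (0:ℝ), ∀ v ≥ (0:ℝ), HasDerivWithinAt (fun s => f u s) (fv u v) (Ici 0) v)
    (hdgu : ∀ u ≥ (0:ℝ), ∀ v ≥ (0:ℝ), HasDerivWithinAt (fun s => g s v) (gu u v) (Ici 0) u)
    (hdgv : ∀ u ≥ (0:ℝ), ∀ v ≥ (0:ℝ), HasDerivWithinAt (fun s => g u s) (gv u v) (Ici 0) v)
    (hfu : ∀ u ≥ (0:ℝ), ∀ v ≥ (0:ℝ), fu u v < 0)
    (hfv : ∀ u ≥ (0:ℝ), ∀ v ≥ (0:ℝ), fv u v < 0)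
    (hgv : ∀ u ≥ (0:ℝ), ∀ v ≥ (0:ℝ), gv u v < 0)
    (hdet : ∀ u ≥ (0:ℝ), ∀ v ≥ (0:ℝ), fv u v * gu u v < fu u v * gv u v)
    (hfuc : ContinuousOn (fun q : ℝ × ℝ => fu q.1 q.2) (Ici 0 ×ˢ Ici 0))
    (hfvc : ContinuousOn (fun q : ℝ × ℝ => fv q.1 q.2) (Ici 0 ×ˢ Ici 0))
    (hguc : ContinuousOn (fun q : ℝ × ℝ => gu q.1 q.2) (Ici 0 ×ˢ Ici 0))
    (hgvc : ContinuousOn (fun q : ℝ × ℝ => gv q.1 q.2) (Ici 0 ×ˢ Ici 0))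
    (hFc : ContinuousOn F (Ici 0)) (hF : ∀ v ≥ (0:ℝ), f (F v) v = 0) {s : ℝ} (hs : 0 ≤ s) :
    ∀ᶠ t in 𝓝[>] s, g (max (F t) 0) t < g (max (F s) 0) s := by
  have hFt : Tendsto F (𝓝[>] s) (𝓝 (F s)) :=
    (hFc s hs).mono_left (nhdsWithin_mono _ (Ioi_subset_Ici hs))
  rcases lt_or_ge 0 (F s) with hFs | hFs
  · filter_upwards [eventually_apply_root_lt hdfu hdfv hdgu hdgv hfu hfv hdet hfuc hfvc hguc hgvc
      hF hs hFt hFs, hFt.eventually (Ioi_mem_nhds hFs)] with t ht hFt0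
    rwa [max_eq_left (le_of_lt hFt0), max_eq_left hFs.le]
  · have hFt_nonpos : ∀ᶠ t in 𝓝[>] s, F t ≤ 0 := by
      rcases hFs.lt_or_eq with hneg | hzero
      · exact (hFt.eventually (Iio_mem_nhds hneg)).mono fun _ h => le_of_lt h
      · exact eventually_nhdsWithin_of_forall fun t ht =>
          (root_lt_root hdfu hdfv hfu hfv hF hs ht hzero.ge).le.trans hzero.le
    filter_upwards [hFt_nonpos, self_mem_nhdsWithin] with t hFt0 hst
    rw [max_eq_right hFt0, max_eq_right hFs]
    exact strictAntiOn_Ici_of_hasDerivWithinAt_neg (hdgv 0 le_rfl) (hgv 0 le_rfl) hs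
      (hs.trans (le_of_lt hst)) hst

lemma strictAntiOn_apply_posPart_root
    (hdfu : ∀ u ≥ (0:ℝ), ∀ v ≥ (0:ℝ), HasDerivWithinAt (fun s => f s v) (fu u v) (Ici 0) u)
    (hdfv : ∀ u ≥ (0:ℝ), ∀ v ≥ (0:ℝ), HasDerivWithinAt (fun s => f u s) (fv u v) (Ici 0) v)
    (hdgu : ∀ u ≥ (0:ℝ), ∀ v ≥ (0:ℝ), HasDerivWithinAt (fun s => g s v) (gu u v) (Ici 0) u)
    (hdgv : ∀ u ≥ (0:ℝ), ∀ v ≥ (0:ℝ), HasDerivWithinAt (fun s => g u s) (gv u v) (Ici 0) v)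
    (hfu : ∀ u ≥ (0:ℝ), ∀ v ≥ (0:ℝ), fu u v < 0)
    (hfv : ∀ u ≥ (0:ℝ), ∀ v ≥ (0:ℝ), fv u v < 0)
    (hgv : ∀ u ≥ (0:ℝ), ∀ v ≥ (0:ℝ), gv u v < 0)
    (hdet : ∀ u ≥ (0:ℝ), ∀ v ≥ (0:ℝ), fv u v * gu u v < fu u v * gv u v)
    (hgc : ContinuousOn (fun q : ℝ × ℝ => g q.1 q.2) (Ici 0 ×ˢ Ici 0))
    (hfuc : ContinuousOn (fun q : ℝ × ℝ => fu q.1 q.2) (Ici 0 ×ˢ Ici 0))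
    (hfvc : ContinuousOn (fun q : ℝ × ℝ => fv q.1 q.2) (Ici 0 ×ˢ Ici 0))
    (hguc : ContinuousOn (fun q : ℝ × ℝ => gu q.1 q.2) (Ici 0 ×ˢ Ici 0))
    (hgvc : ContinuousOn (fun q : ℝ × ℝ => gv q.1 q.2) (Ici 0 ×ˢ Ici 0))
    (hFc : ContinuousOn F (Ici 0)) (hF : ∀ v ≥ (0:ℝ), f (F v) v = 0) :
    StrictAntiOn (fun s => g (max (F s) 0) s) (Ici 0) :=
  strictAntiOn_Ici_of_eventually_lt
    (hgc.comp ((hFc.sup continuousOn_const).prodMk continuousOn_id)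
      fun _ hs => ⟨le_max_right (F _) 0, hs⟩)
    fun _ hs => eventually_apply_posPart_root_lt hdfu hdfv hdgu hdgv hfu hfv hgv hdet hfuc hfvc
      hguc hgvc hFc hF hs

end Reaction

section NonlocalComparison

variable {X : Type*} [TopologicalSpace X] [MeasurableSpace X] [OpensMeasurableSpace X]
  {μ : Measure X} [IsFiniteMeasureOnCompacts μ] {Ω : Set X} {p : X → X → ℝ}

lemma integrableOn_mul_of_isCompact_closure (hK : IsCompact (closure Ω))
    (hp : ∀ x, Continuous (p x)) {w : X → ℝ} (hw : ContinuousOn w (closure Ω)) (x : X) :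
    IntegrableOn (fun y => p x y * w y) Ω μ :=
  (((hp x).continuousOn.mul hw).integrableOn_compact' hK isClosed_closure.measurableSet).mono_set
    subset_closure

lemma setIntegral_mul_sub_add_le_of_eq_mul (hK : IsCompact (closure Ω))
    (hp : ∀ x, Continuous (p x)) {G : X → ℝ → ℝ} {D M : ℝ} (hM : 0 ≤ M) {vstar v : X → ℝ}
    (hvc : ContinuousOn v (closure Ω)) (hvsc : ContinuousOn vstar (closure Ω)) {x : X}
    (hsub : 0 ≤ D * ((∫ y in Ω, p x y * v y ∂μ) - v x) + v x * G x (v x))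
    (hsup : D * ((∫ y in Ω, p x y * vstar y ∂μ) - vstar x) + vstar x * G x (vstar x) ≤ 0)
    (hvx : v x = M * vstar x) :
    D * ∫ y in Ω, p x y * (M * vstar y - v y) ∂μ + v x * (G x (vstar x) - G x (v x)) ≤ 0 := by
  have hlin : ∫ y in Ω, p x y * (M * vstar y - v y) ∂μ
      = M * (∫ y in Ω, p x y * vstar y ∂μ) - ∫ y in Ω, p x y * v y ∂μ := by
    rw [← integral_const_mul, ← integral_sub
      ((integrableOn_mul_of_isCompact_closure hK hp hvsc x).const_mul M)
      (integrableOn_mul_of_isCompact_closure hK hp hvc x)]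
    congr 1 with y
    ring
  rw [hlin]
  linear_combination mul_nonpos_of_nonneg_of_nonpos hM hsup + hsub + (G x (vstar x) - D) * hvx


variable [μ.IsOpenPosMeasure]

lemma eqOn_zero_of_setIntegral_nonpos_of_eq_zero
    (hΩo : IsOpen Ω) (hΩc : IsPreconnected Ω) (hK : IsCompact (closure Ω))
    (hp : ∀ x, Continuous (p x)) (hpnn : ∀ x y, 0 ≤ p x y) (hpd : ∀ x, 0 < p x x)
    {w : X → ℝ} (hw : ContinuousOn w (closure Ω)) (hwnn : ∀ x ∈ closure Ω, 0 ≤ w x)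
    (hzero : ∀ x ∈ closure Ω, w x = 0 → ∫ y in Ω, p x y * w y ∂μ ≤ 0)
    {x₀ : X} (hx₀ : x₀ ∈ closure Ω) (hw₀ : w x₀ = 0) : EqOn w 0 (closure Ω) := by
  have hvanish : ∀ x ∈ closure Ω, w x = 0 → ∀ y ∈ Ω, 0 < p x y → w y = 0 := by
    intro x hx hwx y hy hpy
    have hnn : ∀ y ∈ Ω, 0 ≤ p x y * w y := fun y hy =>
      mul_nonneg (hpnn x y) (hwnn y (subset_closure hy))
    have hint : ∫ y in Ω, p x y * w y ∂μ = 0 :=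
      (hzero x hx hwx).antisymm (setIntegral_nonneg hΩo.measurableSet hnn)
    have hae := (setIntegral_eq_zero_iff_of_nonneg_ae (ae_restrict_of_forall_mem
      hΩo.measurableSet hnn) (integrableOn_mul_of_isCompact_closure hK hp hw x)).1 hint
    have hprod := Measure.eqOn_open_of_ae_eq hae hΩo
      ((hp x).continuousOn.mul (hw.mono subset_closure)) continuousOn_const hy
    exact (mul_eq_zero.1 hprod).resolve_left hpy.ne'
  have hZ : IsOpen (Ω ∩ w ⁻¹' {0}) := isOpen_iff_mem_nhds.2 fun y hy =>
    mem_of_superset (inter_mem ((isOpen_lt continuous_const (hp y)).mem_nhds (hpd y))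
      (hΩo.mem_nhds hy.1)) fun z hz => ⟨hz.2, hvanish y (subset_closure hy.1) hy.2 z hz.2 hz.1⟩
  have hN : IsOpen (Ω ∩ w ⁻¹' {0}ᶜ) :=
    (hw.mono subset_closure).isOpen_inter_preimage hΩo isOpen_compl_singleton
  obtain ⟨y, hy, hyΩ⟩ := mem_closure_iff.1 hx₀ _ (isOpen_lt continuous_const (hp x₀)) (hpd x₀)
  have hΩZ : Ω ⊆ Ω ∩ w ⁻¹' {0} :=
    hΩc.subset_left_of_subset_union hZ hN
      (disjoint_left.2 fun _ h h' => h'.2 h.2)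
      (fun z hz => (em (w z = 0)).imp (fun h => ⟨hz, h⟩) fun h => ⟨hz, h⟩)
      ⟨y, hyΩ, hyΩ, hvanish x₀ hx₀ hw₀ y hyΩ hy⟩
  exact EqOn.of_subset_closure (fun z hz => (hΩZ hz).2) hw continuousOn_const subset_closure
    subset_rfl

lemma pos_of_supersolution (hΩo : IsOpen Ω) (hΩc : IsPreconnected Ω)
    (hK : IsCompact (closure Ω)) (hp : ∀ x, Continuous (p x)) (hpnn : ∀ x y, 0 ≤ p x y)
    (hpd : ∀ x, 0 < p x x) {G : X → ℝ → ℝ} {D : ℝ} (hD : 0 < D) {w : X → ℝ}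
    (hw : ContinuousOn w (closure Ω)) (hwnn : ∀ x ∈ closure Ω, 0 ≤ w x)
    (hwne : ∃ x ∈ closure Ω, w x ≠ 0)
    (hsup : ∀ x ∈ closure Ω, D * ((∫ y in Ω, p x y * w y ∂μ) - w x) + w x * G x (w x) ≤ 0) :
    ∀ x ∈ closure Ω, 0 < w x := by
  intro x hx
  refine (hwnn x hx).lt_of_ne' fun hwx => ?_
  obtain ⟨x₁, hx₁, hne⟩ := hwne
  refine hne (eqOn_zero_of_setIntegral_nonpos_of_eq_zero (μ := μ) hΩo hΩc hK hp hpnn hpd hw hwnn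
    (fun z hz hwz => ?_) hx hwx hx₁)
  have := hsup z hz
  rw [hwz, sub_zero, zero_mul, add_zero] at this
  exact nonpos_of_mul_nonpos_right this hD

theorem lt_or_eqOn_of_subsolution_of_supersolution (hΩo : IsOpen Ω) (hΩc : IsPreconnected Ω)
    (hK : IsCompact (closure Ω)) (hp : ∀ x, Continuous (p x)) (hpnn : ∀ x y, 0 ≤ p x y)
    (hpd : ∀ x, 0 < p x x) {G : X → ℝ → ℝ} (hG : ∀ x ∈ closure Ω, StrictAntiOn (G x) (Ici 0))
    {D : ℝ} (hD : 0 < D) {vstar v : X → ℝ}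
    (hvc : ContinuousOn v (closure Ω))
    (hsub : ∀ x ∈ closure Ω, 0 ≤ D * ((∫ y in Ω, p x y * v y ∂μ) - v x) + v x * G x (v x))
    (hvsc : ContinuousOn vstar (closure Ω)) (hvsnn : ∀ x ∈ closure Ω, 0 ≤ vstar x)
    (hvsne : ∃ x ∈ closure Ω, vstar x ≠ 0)
    (hsup : ∀ x ∈ closure Ω,
      D * ((∫ y in Ω, p x y * vstar y ∂μ) - vstar x) + vstar x * G x (vstar x) ≤ 0) :
    (∀ x ∈ closure Ω, v x < vstar x) ∨ (∀ x ∈ closure Ω, vstar x = v x) := by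
  have hvs := pos_of_supersolution hΩo hΩc hK hp hpnn hpd hD hvsc hvsnn hvsne hsup
  obtain ⟨x₀, hx₀, hmax⟩ := hK.exists_isMaxOn ⟨_, hvsne.choose_spec.1⟩
    (hvc.div hvsc fun x hx => (hvs x hx).ne')
  set M := v x₀ / vstar x₀
  have hle : ∀ x ∈ closure Ω, v x ≤ M * vstar x := fun x hx =>
    (div_le_iff₀ (hvs x hx)).1 (hmax hx)
  by_cases hlt : ∀ x ∈ closure Ω, v x < vstar x
  · exact Or.inl hlt
  push Not at hlt
  obtain ⟨x₁, hx₁, hvx₁⟩ := hlt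
  have hM : 1 ≤ M := by nlinarith [hle x₁ hx₁, hvs x₁ hx₁]
  have hvx₀ : v x₀ = M * vstar x₀ := (div_mul_cancel₀ _ (hvs x₀ hx₀).ne').symm
  have htouch : ∀ x ∈ closure Ω, v x = M * vstar x →
      D * ∫ y in Ω, p x y * (M * vstar y - v y) ∂μ + v x * (G x (vstar x) - G x (v x)) ≤ 0 :=
    fun x hx => setIntegral_mul_sub_add_le_of_eq_mul hK hp (zero_le_one.trans hM) hvc hvsc
      (hsub x hx) (hsup x hx)
  have hw : EqOn (fun y => M * vstar y - v y) 0 (closure Ω) := by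
    refine eqOn_zero_of_setIntegral_nonpos_of_eq_zero (μ := μ) hΩo hΩc hK hp hpnn hpd
      (continuousOn_const.mul hvsc |>.sub hvc) (fun x hx => sub_nonneg.2 (hle x hx))
      (fun x hx hwx => ?_) hx₀ (sub_eq_zero.2 hvx₀.symm)
    have hvx : v x = M * vstar x := (sub_eq_zero.1 hwx).symm
    have hv : 0 ≤ v x := hvx ▸ mul_nonneg (zero_le_one.trans hM) (hvs x hx).le
    have hG_le : G x (v x) ≤ G x (vstar x) :=
      (hG x hx).antitoneOn (hvs x hx).le hv (by nlinarith [hvs x hx])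
    nlinarith [htouch x hx hvx]
  have hM1 : M ≤ 1 := by
    have hint : ∫ y in Ω, p x₀ y * (M * vstar y - v y) ∂μ = 0 :=
      setIntegral_eq_zero_of_forall_eq_zero fun y hy => by
        rw [show M * vstar y - v y = 0 from hw (subset_closure hy), mul_zero]
    have hv₀ : 0 < v x₀ := hvx₀ ▸ mul_pos (zero_lt_one.trans_le hM) (hvs x₀ hx₀)
    have hG_le : G x₀ (vstar x₀) ≤ G x₀ (v x₀) := by
      have := htouch x₀ hx₀ hvx₀
      rw [hint, mul_zero, zero_add] at this
      exact sub_nonpos.1 (nonpos_of_mul_nonpos_right this hv₀)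
    have := ((hG x₀ hx₀).le_iff_ge (hvs x₀ hx₀).le hv₀.le).1 hG_le
    nlinarith [hvs x₀ hx₀]
  refine Or.inr fun x hx => ?_
  have := hw hx
  simp only [le_antisymm hM1 hM, one_mul, Pi.zero_apply, sub_eq_zero] at this
  exact this

end NonlocalComparison

theorem stmt_9_general
    {n : ℕ}
    (Ω : Set (Fin n → ℝ)) (hΩo : IsOpen Ω) (hΩb : Bornology.IsBounded Ω)
    (hΩc : IsConnected Ω)
    (p : (Fin n → ℝ) → (Fin n → ℝ) → ℝ)
    (hpc : Continuous (Function.uncurry p)) (hpnn : ∀ x y, 0 ≤ p x y)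
    (hpd : ∀ x, 0 < p x x)
    (f g fu fv gu gv : (Fin n → ℝ) → ℝ → ℝ → ℝ)
    (hdfu : ∀ x ∈ closure Ω, ∀ u ∈ Set.Ici (0:ℝ), ∀ v ∈ Set.Ici (0:ℝ),
      HasDerivWithinAt (fun s => f x s v) (fu x u v) (Set.Ici 0) u)
    (hdfv : ∀ x ∈ closure Ω, ∀ u ∈ Set.Ici (0:ℝ), ∀ v ∈ Set.Ici (0:ℝ),
      HasDerivWithinAt (fun s => f x u s) (fv x u v) (Set.Ici 0) v)
    (hdgu : ∀ x ∈ closure Ω, ∀ u ∈ Set.Ici (0:ℝ), ∀ v ∈ Set.Ici (0:ℝ),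
      HasDerivWithinAt (fun s => g x s v) (gu x u v) (Set.Ici 0) u)
    (hdgv : ∀ x ∈ closure Ω, ∀ u ∈ Set.Ici (0:ℝ), ∀ v ∈ Set.Ici (0:ℝ),
      HasDerivWithinAt (fun s => g x u s) (gv x u v) (Set.Ici 0) v)
    (hgcont : ContinuousOn (fun q : (Fin n → ℝ) × ℝ × ℝ => g q.1 q.2.1 q.2.2)
      ((closure Ω) ×ˢ (Set.Ici 0 ×ˢ Set.Ici 0)))
    (hfucont : ContinuousOn (fun q : (Fin n → ℝ) × ℝ × ℝ => fu q.1 q.2.1 q.2.2)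
      ((closure Ω) ×ˢ (Set.Ici 0 ×ˢ Set.Ici 0)))
    (hfvcont : ContinuousOn (fun q : (Fin n → ℝ) × ℝ × ℝ => fv q.1 q.2.1 q.2.2)
      ((closure Ω) ×ˢ (Set.Ici 0 ×ˢ Set.Ici 0)))
    (hgucont : ContinuousOn (fun q : (Fin n → ℝ) × ℝ × ℝ => gu q.1 q.2.1 q.2.2)
      ((closure Ω) ×ˢ (Set.Ici 0 ×ˢ Set.Ici 0)))
    (hgvcont : ContinuousOn (fun q : (Fin n → ℝ) × ℝ × ℝ => gv q.1 q.2.1 q.2.2)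
      ((closure Ω) ×ˢ (Set.Ici 0 ×ˢ Set.Ici 0)))
    (hA2 : ∀ x ∈ closure Ω, ∀ u ∈ Set.Ici (0:ℝ), ∀ v ∈ Set.Ici (0:ℝ),
      fu x u v < 0 ∧ gv x u v < 0)
    (hA3 : ∀ x ∈ closure Ω, ∀ u ∈ Set.Ici (0:ℝ), ∀ v ∈ Set.Ici (0:ℝ),
      fv x u v < 0 ∧ gu x u v < 0)
    (hA5 : ∀ x ∈ closure Ω, ∀ u ∈ Set.Ici (0:ℝ), ∀ v ∈ Set.Ici (0:ℝ),
      fv x u v * gu x u v < fu x u v * gv x u v)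
    (F : (Fin n → ℝ) → ℝ → ℝ)
    (hFcont : ContinuousOn (fun q : (Fin n → ℝ) × ℝ => F q.1 q.2) ((closure Ω) ×ˢ Set.Ici 0))
    (hF : ∀ x ∈ closure Ω, ∀ v ∈ Set.Ici (0:ℝ), f x (F x v) v = 0)
    (D : ℝ) (hD : 0 < D)
    (vstar v : (Fin n → ℝ) → ℝ)
    (hvc : ContinuousOn v (closure Ω))
    (hsub : ∀ x ∈ closure Ω,
      0 ≤ D * ((∫ y in Ω, p x y * v y) - v x) + v x * g x (max (F x (v x)) 0) (v x))
    (hvsc : ContinuousOn vstar (closure Ω)) (hvsnn : ∀ x ∈ closure Ω, 0 ≤ vstar x)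
    (hvsne : ∃ x ∈ closure Ω, vstar x ≠ 0)
    (hsup : ∀ x ∈ closure Ω,
      D * ((∫ y in Ω, p x y * vstar y) - vstar x)
        + vstar x * g x (max (F x (vstar x)) 0) (vstar x) ≤ 0)
 :
    (∀ x ∈ closure Ω, v x < vstar x) ∨ (∀ x ∈ closure Ω, vstar x = v x) := by
  have hG : ∀ x ∈ closure Ω, StrictAntiOn (fun s => g x (max (F x s) 0) s) (Ici 0) :=
    fun x hx => strictAntiOn_apply_posPart_root (hdfu x hx) (hdfv x hx) (hdgu x hx) (hdgv x hx)
      (fun u hu v hv => (hA2 x hx u hu v hv).1) (fun u hu v hv => (hA3 x hx u hu v hv).1)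
      (fun u hu v hv => (hA2 x hx u hu v hv).2) (hA5 x hx)
      (hgcont.uncurry_left (f := fun x (q : ℝ × ℝ) => g x q.1 q.2) x hx)
      (hfucont.uncurry_left (f := fun x (q : ℝ × ℝ) => fu x q.1 q.2) x hx)
      (hfvcont.uncurry_left (f := fun x (q : ℝ × ℝ) => fv x q.1 q.2) x hx)
      (hgucont.uncurry_left (f := fun x (q : ℝ × ℝ) => gu x q.1 q.2) x hx)
      (hgvcont.uncurry_left (f := fun x (q : ℝ × ℝ) => gv x q.1 q.2) x hx)
      (hFcont.uncurry_left x hx) (hF x hx)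
  exact lt_or_eqOn_of_subsolution_of_supersolution hΩo hΩc.isPreconnected hΩb.isCompact_closure
    hpc.uncurry_left hpnn hpd hG hD hvc hsub hvsc hvsnn hvsne hsup

theorem stmt_9
    {n : ℕ} (hn : 1 ≤ n)
    (Ω : Set (Fin n → ℝ)) (hΩo : IsOpen Ω) (hΩb : Bornology.IsBounded Ω)
    (hΩc : IsConnected Ω)
    (p : (Fin n → ℝ) → (Fin n → ℝ) → ℝ)
    (hpc : Continuous (Function.uncurry p)) (hpnn : ∀ x y, 0 ≤ p x y)
    (hpd : ∀ x, 0 < p x x)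
    (hp1 : ∀ x, (∫ y, p x y) = 1) (hp2 : ∀ x, (∫ y, p y x) = 1)
    (f g fu fv gu gv : (Fin n → ℝ) → ℝ → ℝ → ℝ)
    (hdfu : ∀ x ∈ closure Ω, ∀ u ∈ Set.Ici (0:ℝ), ∀ v ∈ Set.Ici (0:ℝ),
      HasDerivWithinAt (fun s => f x s v) (fu x u v) (Set.Ici 0) u)
    (hdfv : ∀ x ∈ closure Ω, ∀ u ∈ Set.Ici (0:ℝ), ∀ v ∈ Set.Ici (0:ℝ),
      HasDerivWithinAt (fun s => f x u s) (fv x u v) (Set.Ici 0) v)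
    (hdgu : ∀ x ∈ closure Ω, ∀ u ∈ Set.Ici (0:ℝ), ∀ v ∈ Set.Ici (0:ℝ),
      HasDerivWithinAt (fun s => g x s v) (gu x u v) (Set.Ici 0) u)
    (hdgv : ∀ x ∈ closure Ω, ∀ u ∈ Set.Ici (0:ℝ), ∀ v ∈ Set.Ici (0:ℝ),
      HasDerivWithinAt (fun s => g x u s) (gv x u v) (Set.Ici 0) v)
    (hfcont : ContinuousOn (fun q : (Fin n → ℝ) × ℝ × ℝ => f q.1 q.2.1 q.2.2)
      ((closure Ω) ×ˢ (Set.Ici 0 ×ˢ Set.Ici 0)))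
    (hgcont : ContinuousOn (fun q : (Fin n → ℝ) × ℝ × ℝ => g q.1 q.2.1 q.2.2)
      ((closure Ω) ×ˢ (Set.Ici 0 ×ˢ Set.Ici 0)))
    (hfucont : ContinuousOn (fun q : (Fin n → ℝ) × ℝ × ℝ => fu q.1 q.2.1 q.2.2)
      ((closure Ω) ×ˢ (Set.Ici 0 ×ˢ Set.Ici 0)))
    (hfvcont : ContinuousOn (fun q : (Fin n → ℝ) × ℝ × ℝ => fv q.1 q.2.1 q.2.2)
      ((closure Ω) ×ˢ (Set.Ici 0 ×ˢ Set.Ici 0)))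
    (hgucont : ContinuousOn (fun q : (Fin n → ℝ) × ℝ × ℝ => gu q.1 q.2.1 q.2.2)
      ((closure Ω) ×ˢ (Set.Ici 0 ×ˢ Set.Ici 0)))
    (hgvcont : ContinuousOn (fun q : (Fin n → ℝ) × ℝ × ℝ => gv q.1 q.2.1 q.2.2)
      ((closure Ω) ×ˢ (Set.Ici 0 ×ˢ Set.Ici 0)))
    (hA2 : ∀ x ∈ closure Ω, ∀ u ∈ Set.Ici (0:ℝ), ∀ v ∈ Set.Ici (0:ℝ),
      fu x u v < 0 ∧ gv x u v < 0)
    (hA3 : ∀ x ∈ closure Ω, ∀ u ∈ Set.Ici (0:ℝ), ∀ v ∈ Set.Ici (0:ℝ),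
      fv x u v < 0 ∧ gu x u v < 0)
    (hA5 : ∀ x ∈ closure Ω, ∀ u ∈ Set.Ici (0:ℝ), ∀ v ∈ Set.Ici (0:ℝ),
      fv x u v * gu x u v < fu x u v * gv x u v)
    (F : (Fin n → ℝ) → ℝ → ℝ)
    (hFcont : ContinuousOn (fun q : (Fin n → ℝ) × ℝ => F q.1 q.2) ((closure Ω) ×ˢ Set.Ici 0))
    (hF : ∀ x ∈ closure Ω, ∀ v ∈ Set.Ici (0:ℝ), f x (F x v) v = 0)
    (D : ℝ) (hD : 0 < D)
    (vstar v : (Fin n → ℝ) → ℝ)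
    (hvc : ContinuousOn v (closure Ω)) (hvnn : ∀ x ∈ closure Ω, 0 ≤ v x)
    (hvne : ∃ x ∈ closure Ω, v x ≠ 0)
    (hsub : ∀ x ∈ closure Ω,
      0 ≤ D * ((∫ y in Ω, p x y * v y) - v x) + v x * g x (max (F x (v x)) 0) (v x))
    (hvsc : ContinuousOn vstar (closure Ω)) (hvsnn : ∀ x ∈ closure Ω, 0 ≤ vstar x)
    (hvsne : ∃ x ∈ closure Ω, vstar x ≠ 0)
    (hsup : ∀ x ∈ closure Ω,
      D * ((∫ y in Ω, p x y * vstar y) - vstar x)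
        + vstar x * g x (max (F x (vstar x)) 0) (vstar x) ≤ 0)
 :
    (∀ x ∈ closure Ω, v x < vstar x) ∨ (∀ x ∈ closure Ω, vstar x = v x) :=
  stmt_9_general Ω hΩo hΩb hΩc p hpc hpnn hpd f g fu fv gu gv hdfu hdfv hdgu hdgv hgcont hfucont
    hfvcont hgucont hgvcont hA2 hA3 hA5 F hFcont hF D hD vstar v hvc hsub hvsc hvsnn hvsne hsup
end

section
/- Assume (A0)–(A3) and (A5) hold. If v* ∈ C(Ω̄) is nonnegative, v* ≢ 0, and satisfies DP[v*](x) + v*(x) g(x, F₊(x,v*(x)), v*(x)) ≤ 0 for all x ∈ Ω̄ (D > 0), then v* > 0 everywhere on Ω̄. -/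
open MeasureTheory Filter BoundedContinuousFunction

theorem stmt_10
    {n : ℕ} (hn : 1 ≤ n)
    (Ω : Set (Fin n → ℝ)) (hΩo : IsOpen Ω) (hΩb : Bornology.IsBounded Ω)
    (hΩc : IsConnected Ω)
    (p : (Fin n → ℝ) → (Fin n → ℝ) → ℝ)
    (hpc : Continuous (Function.uncurry p)) (hpnn : ∀ x y, 0 ≤ p x y)
    (hpd : ∀ x, 0 < p x x)
    (hp1 : ∀ x, (∫ y, p x y) = 1) (hp2 : ∀ x, (∫ y, p y x) = 1)
    (f g fu fv gu gv : (Fin n → ℝ) → ℝ → ℝ → ℝ)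
    (hdfu : ∀ x ∈ closure Ω, ∀ u ∈ Set.Ici (0:ℝ), ∀ v ∈ Set.Ici (0:ℝ),
      HasDerivWithinAt (fun s => f x s v) (fu x u v) (Set.Ici 0) u)
    (hdfv : ∀ x ∈ closure Ω, ∀ u ∈ Set.Ici (0:ℝ), ∀ v ∈ Set.Ici (0:ℝ),
      HasDerivWithinAt (fun s => f x u s) (fv x u v) (Set.Ici 0) v)
    (hdgu : ∀ x ∈ closure Ω, ∀ u ∈ Set.Ici (0:ℝ), ∀ v ∈ Set.Ici (0:ℝ),
      HasDerivWithinAt (fun s => g x s v) (gu x u v) (Set.Ici 0) u)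
    (hdgv : ∀ x ∈ closure Ω, ∀ u ∈ Set.Ici (0:ℝ), ∀ v ∈ Set.Ici (0:ℝ),
      HasDerivWithinAt (fun s => g x u s) (gv x u v) (Set.Ici 0) v)
    (hfcont : ContinuousOn (fun q : (Fin n → ℝ) × ℝ × ℝ => f q.1 q.2.1 q.2.2)
      ((closure Ω) ×ˢ (Set.Ici 0 ×ˢ Set.Ici 0)))
    (hgcont : ContinuousOn (fun q : (Fin n → ℝ) × ℝ × ℝ => g q.1 q.2.1 q.2.2)
      ((closure Ω) ×ˢ (Set.Ici 0 ×ˢ Set.Ici 0)))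
    (hfucont : ContinuousOn (fun q : (Fin n → ℝ) × ℝ × ℝ => fu q.1 q.2.1 q.2.2)
      ((closure Ω) ×ˢ (Set.Ici 0 ×ˢ Set.Ici 0)))
    (hfvcont : ContinuousOn (fun q : (Fin n → ℝ) × ℝ × ℝ => fv q.1 q.2.1 q.2.2)
      ((closure Ω) ×ˢ (Set.Ici 0 ×ˢ Set.Ici 0)))
    (hgucont : ContinuousOn (fun q : (Fin n → ℝ) × ℝ × ℝ => gu q.1 q.2.1 q.2.2)
      ((closure Ω) ×ˢ (Set.Ici 0 ×ˢ Set.Ici 0)))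
    (hgvcont : ContinuousOn (fun q : (Fin n → ℝ) × ℝ × ℝ => gv q.1 q.2.1 q.2.2)
      ((closure Ω) ×ˢ (Set.Ici 0 ×ˢ Set.Ici 0)))
    (hA2 : ∀ x ∈ closure Ω, ∀ u ∈ Set.Ici (0:ℝ), ∀ v ∈ Set.Ici (0:ℝ),
      fu x u v < 0 ∧ gv x u v < 0)
    (hA3 : ∀ x ∈ closure Ω, ∀ u ∈ Set.Ici (0:ℝ), ∀ v ∈ Set.Ici (0:ℝ),
      fv x u v < 0 ∧ gu x u v < 0)
    (hA5 : ∀ x ∈ closure Ω, ∀ u ∈ Set.Ici (0:ℝ), ∀ v ∈ Set.Ici (0:ℝ),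
      fv x u v * gu x u v < fu x u v * gv x u v)
    (F : (Fin n → ℝ) → ℝ → ℝ)
    (hFcont : ContinuousOn (fun q : (Fin n → ℝ) × ℝ => F q.1 q.2) ((closure Ω) ×ˢ Set.Ici 0))
    (hF : ∀ x ∈ closure Ω, ∀ v ∈ Set.Ici (0:ℝ), f x (F x v) v = 0)
    (D : ℝ) (hD : 0 < D)
    (vstar : (Fin n → ℝ) → ℝ)
    (hvsc : ContinuousOn vstar (closure Ω)) (hvsnn : ∀ x ∈ closure Ω, 0 ≤ vstar x)
    (hvsne : ∃ x ∈ closure Ω, vstar x ≠ 0)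
    (hsup : ∀ x ∈ closure Ω,
      D * ((∫ y in Ω, p x y * vstar y) - vstar x)
        + vstar x * g x (max (F x (vstar x)) 0) (vstar x) ≤ 0)
 :
    ∀ x ∈ closure Ω, 0 < vstar x := by
  by_contra hcon
  push_neg at hcon
  obtain ⟨x₀, hx₀c, hx₀le⟩ := hcon
  have hx₀ : vstar x₀ = 0 := le_antisymm hx₀le (hvsnn x₀ hx₀c)
  -- closure Ω is compact
  have hcomp : IsCompact (closure Ω) :=
    Metric.isCompact_of_isClosed_isBounded isClosed_closure hΩb.closure
  have hΩsub : Ω ⊆ closure Ω := subset_closure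
  -- key lemma: at a zero of vstar on closure Ω, integrand vanishes on Ω
  have key : ∀ x ∈ closure Ω, vstar x = 0 → ∀ y ∈ Ω, p x y * vstar y = 0 := by
    intro x hxc hx0 y hy
    have hpxc : Continuous (fun y => p x y) := hpc.comp (Continuous.prodMk_right x)
    have hcontOn : ContinuousOn (fun y => p x y * vstar y) (closure Ω) :=
      hpxc.continuousOn.mul hvsc
    have hinteg : IntegrableOn (fun y => p x y * vstar y) Ω volume :=
      (hcontOn.integrableOn_compact hcomp).mono_set hΩsub
    have hnn : ∀ y ∈ Ω, 0 ≤ p x y * vstar y := fun y hy =>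
      mul_nonneg (hpnn x y) (hvsnn y (hΩsub hy))
    have hle : (∫ y in Ω, p x y * vstar y) ≤ 0 := by
      have := hsup x hxc
      rw [hx0] at this
      nlinarith [this]
    have hge : (0:ℝ) ≤ ∫ y in Ω, p x y * vstar y :=
      setIntegral_nonneg hΩo.measurableSet hnn
    have hIz : (∫ y in Ω, p x y * vstar y) = 0 := le_antisymm hle hge
    by_contra hne
    have hpos : 0 < p x y * vstar y := lt_of_le_of_ne (hnn y hy) (Ne.symm hne)
    -- continuity at y gives an open set where integrand is positive
    have hca : ContinuousAt (fun y => p x y * vstar y) y :=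
      (hcontOn.mono hΩsub).continuousAt (hΩo.mem_nhds hy)
    have hev : ∀ᶠ z in nhds y, 0 < p x z * vstar z :=
      continuousAt_const.eventually_lt hca hpos |>.mono (fun z hz => hz)
    obtain ⟨U, hUp, hUopen, hyU⟩ := eventually_nhds_iff.mp hev
    have hUΩ : IsOpen (U ∩ Ω) := hUopen.inter hΩo
    have hUΩne : (U ∩ Ω).Nonempty := ⟨y, hyU, hy⟩
    have hmeas : 0 < volume (U ∩ Ω) := hUΩ.measure_pos volume hUΩne
    have hsupp : U ∩ Ω ⊆ Function.support (fun y => p x y * vstar y) ∩ Ω := by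
      rintro z ⟨hzU, hzΩ⟩
      exact ⟨ne_of_gt (hUp z hzU), hzΩ⟩
    have hpos2 : 0 < ∫ y in Ω, p x y * vstar y := by
      rw [setIntegral_pos_iff_support_of_nonneg_ae]
      · exact lt_of_lt_of_le hmeas (measure_mono hsupp)
      · exact (ae_restrict_iff' hΩo.measurableSet).mpr (Eventually.of_forall hnn)
      · exact hinteg
    linarith [hpos2, hIz.le]
  -- seed: there is a point of Ω where vstar vanishes
  have seed : ∃ y ∈ Ω, vstar y = 0 := by
    have hpxc : Continuous (fun y => p x₀ y) := hpc.comp (Continuous.prodMk_right x₀)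
    have hev : ∀ᶠ z in nhds x₀, 0 < p x₀ z :=
      continuousAt_const.eventually_lt hpxc.continuousAt (hpd x₀) |>.mono (fun z hz => hz)
    obtain ⟨U, hUpos, hUopen, hx₀U⟩ := eventually_nhds_iff.mp hev
    obtain ⟨y, hyU, hyΩ⟩ := mem_closure_iff.mp hx₀c U hUopen hx₀U
    have := key x₀ hx₀c hx₀ y hyΩ
    have hpy : 0 < p x₀ y := hUpos y hyU
    exact ⟨y, hyΩ, by
      rcases mul_eq_zero.mp this with h | h
      · exact absurd h (ne_of_gt hpy)
      · exact h⟩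
  -- clopen argument: vstar = 0 on all of Ω
  have hzero : ∀ y ∈ Ω, vstar y = 0 := by
    set A : Set (Fin n → ℝ) := {z | z ∈ Ω ∧ vstar z = 0} with hA
    set B : Set (Fin n → ℝ) := {z | z ∈ Ω ∧ vstar z ≠ 0} with hB
    have hAopen : IsOpen A := by
      rw [isOpen_iff_mem_nhds]
      rintro z ⟨hzΩ, hz0⟩
      have hkz := key z (hΩsub hzΩ) hz0
      have hpzc : Continuous (fun y => p z y) := hpc.comp (Continuous.prodMk_right z)
      have hev : ∀ᶠ w in nhds z, 0 < p z w :=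
        continuousAt_const.eventually_lt hpzc.continuousAt (hpd z) |>.mono (fun w hw => hw)
      have hΩnhds : Ω ∈ nhds z := hΩo.mem_nhds hzΩ
      filter_upwards [hev, hΩnhds] with w hw hwΩ
      refine ⟨hwΩ, ?_⟩
      have := hkz w hwΩ
      rcases mul_eq_zero.mp this with h | h
      · exact absurd h (ne_of_gt hw)
      · exact h
    have hBopen : IsOpen B := by
      rw [isOpen_iff_mem_nhds]
      rintro z ⟨hzΩ, hzne⟩
      have hca : ContinuousAt vstar z :=
        (hvsc.mono hΩsub).continuousAt (hΩo.mem_nhds hzΩ)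
      have hev : ∀ᶠ w in nhds z, vstar w ≠ 0 := hca.eventually_ne hzne
      filter_upwards [hev, hΩo.mem_nhds hzΩ] with w hw hwΩ
      exact ⟨hwΩ, hw⟩
    intro y hy
    by_contra hyne
    have hpre := hΩc.isPreconnected
    have hcover : Ω ⊆ A ∪ B := by
      intro z hz
      by_cases h : vstar z = 0
      · exact Or.inl ⟨hz, h⟩
      · exact Or.inr ⟨hz, h⟩
    obtain ⟨y₁, hy₁Ω, hy₁⟩ := seed
    have hAne : (Ω ∩ A).Nonempty := ⟨y₁, hy₁Ω, hy₁Ω, hy₁⟩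
    have hBne : (Ω ∩ B).Nonempty := ⟨y, hy, hy, hyne⟩
    obtain ⟨w, _, ⟨_, hw0⟩, ⟨_, hwne⟩⟩ := hpre A B hAopen hBopen hcover hAne hBne
    exact hwne hw0
  -- extend to closure by continuity, contradicting hvsne
  obtain ⟨x₁, hx₁c, hx₁ne⟩ := hvsne
  have hNB : (nhdsWithin x₁ Ω).NeBot := mem_closure_iff_nhdsWithin_neBot.mp hx₁c
  have ht1 : Tendsto vstar (nhdsWithin x₁ Ω) (nhds (vstar x₁)) :=
    (hvsc x₁ hx₁c).mono_left (nhdsWithin_mono x₁ hΩsub)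
  have ht2 : Tendsto vstar (nhdsWithin x₁ Ω) (nhds 0) := by
    apply Tendsto.congr' _ tendsto_const_nhds
    filter_upwards [self_mem_nhdsWithin] with z hz
    exact (hzero z hz).symm
  exact hx₁ne (tendsto_nhds_unique ht1 ht2)
end

section
/- Assume (A0)–(A5) hold, η_D exists, and μ₀ < 0. Then ν_D⁰ > 0, i.e., max_{x∈Ω̄} f(x,0,η_D(x)) > 0. -/
open MeasureTheory Filter BoundedContinuousFunction Set

/-!
Testing the sup–inf characterisation of `μ₀` with `φ = η_D`, and using the equation of `η_D`,
gives a point `x₀ ∈ Ω` with `g(x₀, F₊(x₀,0), 0) < g(x₀, 0, η_D(x₀))`. At `x₀` the claim is planar: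
if `f(0, η) ≤ 0`, the nullcline `f = 0` runs from `(F(0), 0)` to a point `(0, V)` with `V ≤ η`, and
by (A5) `g` strictly decreases along it (formally, its derivative along the curve is
`(f_u g_v - f_v g_u) / f_u < 0`), so `g(0, η) ≤ g(0, V) < g(F(0), 0)`, a contradiction.
Instead of an implicit function theorem, the decrease along the nullcline is proved step by step
with the mean value theorem; compactness keeps the mixed determinant `f_u g_v - f_v g_u` positive
when its four entries are evaluated at four different, but close, points.
-/

theorem Real.exists_neg_of_sInf_neg {s : Set ℝ} (hs : sInf s < 0) : ∃ x ∈ s, x < 0 := by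
  by_contra! h
  exact hs.not_ge (Real.sInf_nonneg h)

theorem Real.forall_neg_of_sSup_neg {s : Set ℝ} (hs : sSup s < 0) : ∀ x ∈ s, x < 0 := by
  have hbdd : BddAbove s := by
    by_contra h
    exact (Real.sSup_of_not_bddAbove h ▸ hs).false
  exact fun x hx => (le_csSup hbdd hx).trans_lt hs

theorem ContinuousOn.slice {X : Type*} [TopologicalSpace X] {h : X → ℝ → ℝ → ℝ} {A : Set X}
    {Q : Set (ℝ × ℝ)} (hh : ContinuousOn (fun q : X × ℝ × ℝ => h q.1 q.2.1 q.2.2) (A ×ˢ Q))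
    {x : X} (hx : x ∈ A) : ContinuousOn (fun q : ℝ × ℝ => h x q.1 q.2) Q :=
  hh.comp (f := fun q : ℝ × ℝ => (x, q)) (by fun_prop) fun _ hq => ⟨hx, hq⟩

theorem strictAntiOn_of_forall_lt_le_add {s : Set ℝ} [hs : s.OrdConnected] {φ : ℝ → ℝ} {σ : ℝ}
    (hσ : 0 < σ) (h : ∀ x ∈ s, ∀ y ∈ s, x < y → y ≤ x + σ → φ y < φ x) : StrictAntiOn φ s := by
  have hsteps : ∀ k : ℕ, ∀ x ∈ s, ∀ y ∈ s, x < y → y ≤ x + k * σ → φ y < φ x := by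
    intro k
    induction k with
    | zero => intro x _ y _ hxy hy; simp only [CharP.cast_eq_zero, zero_mul] at hy; linarith
    | succ k ih =>
      intro x hx y hy hxy hyk
      rcases le_or_gt y (x + σ) with hyσ | hyσ
      · exact h x hx y hy hxy hyσ
      · have hz : x + σ ∈ s := hs.out hx hy ⟨by linarith, hyσ.le⟩
        push_cast at hyk
        exact (ih _ hz y hy hyσ (by linarith)).trans (h x hx _ hz (by linarith) le_rfl)
  intro x hx y hy hxy
  obtain ⟨k, hk⟩ := exists_nat_gt ((y - x) / σ)
  exact hsteps k x hx y hy hxy (by rw [div_lt_iff₀ hσ] at hk; linarith)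

theorem IsCompact.exists_pos_forall_lt_imp_pos {β : Type*} [TopologicalSpace β] [T2Space β]
    {W : Set β} (hW : IsCompact W) {N d : β → ℝ} (hN : ContinuousOn N W) (hd : ContinuousOn d W)
    (h : ∀ w ∈ W, d w ≤ 0 → 0 < N w) : ∃ ε > 0, ∀ w ∈ W, d w < ε → 0 < N w := by
  have hK : IsCompact (W ∩ N ⁻¹' Iic 0) := hW.of_isClosed_subset
    (hN.preimage_isClosed_of_isClosed hW.isClosed isClosed_Iic) inter_subset_left
  obtain ⟨ε, hε, hεd⟩ := hK.exists_forall_le' (hd.mono inter_subset_left)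
    fun w hw => lt_of_not_ge fun hdw => (h w hw.1 hdw).not_ge hw.2
  exact ⟨ε, hε, fun w hw hdw => lt_of_not_ge fun hNw => (hεd w ⟨hw, hNw⟩).not_gt hdw⟩

theorem strictAntiOn_of_forall_hasDerivWithinAt_neg {D : Set ℝ} (hD : Convex ℝ D)
    {φ φ' : ℝ → ℝ} (hφ : ∀ t ∈ D, HasDerivWithinAt φ (φ' t) D t) (hneg : ∀ t ∈ D, φ' t < 0) :
    StrictAntiOn φ D :=
  strictAntiOn_of_hasDerivWithinAt_neg hD (fun t ht => (hφ t ht).continuousWithinAt)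
    (fun t ht => (hφ t (interior_subset ht)).mono interior_subset)
    fun t ht => hneg t (interior_subset ht)

theorem exists_mem_Ioo_sub_eq_mul_of_hasDerivWithinAt {D : Set ℝ} {φ φ' : ℝ → ℝ} {a b : ℝ}
    (hab : a < b) (hD : Icc a b ⊆ D) (hφ : ∀ t ∈ D, HasDerivWithinAt φ (φ' t) D t) :
    ∃ c ∈ Ioo a b, φ b - φ a = φ' c * (b - a) := by
  obtain ⟨c, hc, hslope⟩ := exists_hasDerivAt_eq_slope φ φ' hab
    (fun t ht => ((hφ t (hD ht)).continuousWithinAt.mono hD))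
    fun t ht => (hφ t (hD (Ioo_subset_Icc_self ht))).hasDerivAt
      (mem_of_superset (Ioo_mem_nhds ht.1 ht.2) (Ioo_subset_Icc_self.trans hD))
  exact ⟨c, hc, by rw [hslope, div_mul_cancel₀ _ (sub_ne_zero.mpr hab.ne')]⟩

structure HasContinuousPartialsOnQuadrant (f fu fv : ℝ → ℝ → ℝ) : Prop where
  hasDerivWithinAt_left : ∀ u ∈ Ici (0:ℝ), ∀ v ∈ Ici (0:ℝ),
    HasDerivWithinAt (fun s => f s v) (fu u v) (Ici 0) u
  hasDerivWithinAt_right : ∀ u ∈ Ici (0:ℝ), ∀ v ∈ Ici (0:ℝ),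
    HasDerivWithinAt (fun s => f u s) (fv u v) (Ici 0) v
  continuousOn_partial_left : ContinuousOn (fun q : ℝ × ℝ => fu q.1 q.2) (Ici 0 ×ˢ Ici 0)
  continuousOn_partial_right : ContinuousOn (fun q : ℝ × ℝ => fv q.1 q.2) (Ici 0 ×ˢ Ici 0)

namespace HasContinuousPartialsOnQuadrant

variable {f fu fv : ℝ → ℝ → ℝ}

theorem continuousOn_left (hf : HasContinuousPartialsOnQuadrant f fu fv) {v : ℝ} (hv : 0 ≤ v) :
    ContinuousOn (fun s => f s v) (Ici 0) :=
  fun u hu => (hf.hasDerivWithinAt_left u hu v hv).continuousWithinAt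

theorem continuousOn_right (hf : HasContinuousPartialsOnQuadrant f fu fv) {u : ℝ} (hu : 0 ≤ u) :
    ContinuousOn (fun s => f u s) (Ici 0) :=
  fun v hv => (hf.hasDerivWithinAt_right u hu v hv).continuousWithinAt

theorem strictAntiOn_left (hf : HasContinuousPartialsOnQuadrant f fu fv)
    (hfu : ∀ u ∈ Ici (0:ℝ), ∀ v ∈ Ici (0:ℝ), fu u v < 0) {v : ℝ} (hv : 0 ≤ v) :
    StrictAntiOn (fun s => f s v) (Ici 0) :=
  strictAntiOn_of_forall_hasDerivWithinAt_neg (convex_Ici 0)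
    (fun u hu => hf.hasDerivWithinAt_left u hu v hv) fun u hu => hfu u hu v hv

theorem strictAntiOn_right (hf : HasContinuousPartialsOnQuadrant f fu fv)
    (hfv : ∀ u ∈ Ici (0:ℝ), ∀ v ∈ Ici (0:ℝ), fv u v < 0) {u : ℝ} (hu : 0 ≤ u) :
    StrictAntiOn (fun s => f u s) (Ici 0) :=
  strictAntiOn_of_forall_hasDerivWithinAt_neg (convex_Ici 0)
    (fun v hv => hf.hasDerivWithinAt_right u hu v hv) fun v hv => hfv u hu v hv

/-- Mean value theorem along the path `(u₁, v₁) → (u₂, v₁) → (u₂, v₂)`. -/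
theorem exists_sub_eq (hf : HasContinuousPartialsOnQuadrant f fu fv) {u₁ u₂ v₁ v₂ : ℝ}
    (hu₂ : 0 ≤ u₂) (hu : u₂ < u₁) (hv₁ : 0 ≤ v₁) (hv : v₁ < v₂) :
    ∃ c ∈ Ioo u₂ u₁, ∃ d ∈ Ioo v₁ v₂,
      f u₂ v₂ - f u₁ v₁ = fv u₂ d * (v₂ - v₁) - fu c v₁ * (u₁ - u₂) := by
  obtain ⟨c, hc, hfc⟩ := exists_mem_Ioo_sub_eq_mul_of_hasDerivWithinAt hu
    (Icc_subset_Ici_iff hu.le |>.mpr hu₂) fun u hu => hf.hasDerivWithinAt_left u hu v₁ hv₁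
  obtain ⟨d, hd, hfd⟩ := exists_mem_Ioo_sub_eq_mul_of_hasDerivWithinAt hv
    (Icc_subset_Ici_iff hv.le |>.mpr hv₁) fun v hv => hf.hasDerivWithinAt_right u₂ hu₂ v hv
  exact ⟨c, hc, d, hd, by linarith⟩

end HasContinuousPartialsOnQuadrant

section Nullcline

variable {f g fu fv gu gv : ℝ → ℝ → ℝ}

theorem lt_of_nullcline_of_lt (hf : HasContinuousPartialsOnQuadrant f fu fv)
    (hfu : ∀ u ∈ Ici (0:ℝ), ∀ v ∈ Ici (0:ℝ), fu u v < 0)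
    (hfv : ∀ u ∈ Ici (0:ℝ), ∀ v ∈ Ici (0:ℝ), fv u v < 0) {u₁ u₂ v₁ v₂ : ℝ}
    (hu₁ : 0 ≤ u₁) (hu₂ : 0 ≤ u₂) (hv₁ : 0 ≤ v₁) (hv : v₁ < v₂)
    (h₁ : f u₁ v₁ = 0) (h₂ : f u₂ v₂ = 0) : u₂ < u₁ := by
  have h : f u₁ v₂ < f u₂ v₂ := by
    rw [h₂, ← h₁]
    exact hf.strictAntiOn_right hfv hu₁ hv₁ (hv₁.trans hv.le) hv
  exact ((hf.strictAntiOn_left hfu (hv₁.trans hv.le)).lt_iff_gt hu₁ hu₂).mp h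

theorem exists_nullcline_lipschitz (hf : HasContinuousPartialsOnQuadrant f fu fv)
    (hfu : ∀ u ∈ Ici (0:ℝ), ∀ v ∈ Ici (0:ℝ), fu u v < 0)
    (hfv : ∀ u ∈ Ici (0:ℝ), ∀ v ∈ Ici (0:ℝ), fv u v < 0) (M V : ℝ) :
    ∃ K ≥ 0, ∀ u₁ ∈ Icc 0 M, ∀ u₂ ∈ Icc 0 M, ∀ v₁ ∈ Icc 0 V, ∀ v₂ ∈ Icc 0 V,
      f u₁ v₁ = 0 → f u₂ v₂ = 0 → v₁ < v₂ → u₁ - u₂ ≤ K * (v₂ - v₁) := by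
  have hS : IsCompact (Icc 0 M ×ˢ Icc 0 V) := isCompact_Icc.prod isCompact_Icc
  have hSQ : Icc 0 M ×ˢ Icc 0 V ⊆ Ici (0:ℝ) ×ˢ Ici (0:ℝ) :=
    prod_mono Icc_subset_Ici_self Icc_subset_Ici_self
  obtain ⟨δ, hδ, hδfu⟩ := hS.exists_forall_le' (hf.continuousOn_partial_left.mono hSQ).neg
    fun q hq => neg_pos.mpr (hfu q.1 (hSQ hq).1 q.2 (hSQ hq).2)
  obtain ⟨B, hB⟩ := hS.exists_bound_of_continuousOn (hf.continuousOn_partial_right.mono hSQ)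
  refine ⟨max (B / δ) 0, le_max_right _ _, ?_⟩
  intro u₁ hu₁ u₂ hu₂ v₁ hv₁ v₂ hv₂ h₁ h₂ hv
  have hu := lt_of_nullcline_of_lt hf hfu hfv hu₁.1 hu₂.1 hv₁.1 hv h₁ h₂
  obtain ⟨c, hc, d, hd, hdiff⟩ := hf.exists_sub_eq hu₂.1 hu hv₁.1 hv
  have hfuc : δ ≤ -fu c v₁ := hδfu (c, v₁) ⟨⟨hu₂.1.trans hc.1.le, hc.2.le.trans hu₁.2⟩, hv₁⟩
  have hfvd : -fv u₂ d ≤ B := (neg_le_abs _).trans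
    (hB (u₂, d) ⟨hu₂, ⟨hv₁.1.trans hd.1.le, hd.2.le.trans hv₂.2⟩⟩)
  have hlip : (u₁ - u₂) * δ ≤ B * (v₂ - v₁) := calc
    (u₁ - u₂) * δ ≤ (u₁ - u₂) * -fu c v₁ := mul_le_mul_of_nonneg_left hfuc (sub_pos.mpr hu).le
    _ = -fv u₂ d * (v₂ - v₁) := by linarith
    _ ≤ B * (v₂ - v₁) := mul_le_mul_of_nonneg_right hfvd (sub_pos.mpr hv).le
  calc u₁ - u₂ ≤ B / δ * (v₂ - v₁) := by rwa [div_mul_eq_mul_div, le_div_iff₀ hδ]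
    _ ≤ max (B / δ) 0 * (v₂ - v₁) :=
      mul_le_mul_of_nonneg_right (le_max_left _ _) (sub_pos.mpr hv).le

theorem exists_mixed_det_pos (hf : HasContinuousPartialsOnQuadrant f fu fv)
    (hg : HasContinuousPartialsOnQuadrant g gu gv)
    (hdet : ∀ u ∈ Ici (0:ℝ), ∀ v ∈ Ici (0:ℝ), fv u v * gu u v < fu u v * gv u v)
    {S : Set (ℝ × ℝ)} (hS : IsCompact S) (hSQ : S ⊆ Ici 0 ×ˢ Ici 0) :
    ∃ ε > 0, ∀ p₁ ∈ S, ∀ p₂ ∈ S, ∀ p₃ ∈ S, ∀ p₄ ∈ S,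
      dist p₁ p₂ < ε → dist p₁ p₃ < ε → dist p₁ p₄ < ε →
      fv p₂.1 p₂.2 * gu p₃.1 p₃.2 < fu p₁.1 p₁.2 * gv p₄.1 p₄.2 := by
  set W := S ×ˢ S ×ˢ S ×ˢ S
  have hcomp : ∀ {φ : ℝ → ℝ → ℝ} {π : (ℝ × ℝ) × (ℝ × ℝ) × (ℝ × ℝ) × (ℝ × ℝ) → ℝ × ℝ},
      ContinuousOn (fun q : ℝ × ℝ => φ q.1 q.2) (Ici 0 ×ˢ Ici 0) → Continuous π →
      MapsTo π W S → ContinuousOn (fun w => φ (π w).1 (π w).2) W :=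
    fun hφ hπ hW => (hφ.mono hSQ).comp hπ.continuousOn hW
  set N := fun w : (ℝ × ℝ) × (ℝ × ℝ) × (ℝ × ℝ) × (ℝ × ℝ) =>
    fu w.1.1 w.1.2 * gv w.2.2.2.1 w.2.2.2.2 - fv w.2.1.1 w.2.1.2 * gu w.2.2.1.1 w.2.2.1.2
  set d := fun w : (ℝ × ℝ) × (ℝ × ℝ) × (ℝ × ℝ) × (ℝ × ℝ) =>
    dist w.1 w.2.1 + dist w.1 w.2.2.1 + dist w.1 w.2.2.2
  have hdiag : ∀ w ∈ W, d w ≤ 0 → 0 < N w := by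
    rintro ⟨p₁, p₂, p₃, p₄⟩ ⟨h₁, -⟩ hd
    obtain ⟨h₂, h₃, h₄⟩ : p₁ = p₂ ∧ p₁ = p₃ ∧ p₁ = p₄ := by
      refine ⟨?_, ?_, ?_⟩ <;> refine dist_le_zero.mp ?_ <;>
        linarith [dist_nonneg (x := p₁) (y := p₂), dist_nonneg (x := p₁) (y := p₃),
          dist_nonneg (x := p₁) (y := p₄)]
    subst h₂ h₃ h₄
    linarith [hdet p₁.1 (hSQ h₁).1 p₁.2 (hSQ h₁).2]
  obtain ⟨ε, hε, hN⟩ := (hS.prod (hS.prod (hS.prod hS))).exists_pos_forall_lt_imp_pos (N := N)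
    (((hcomp hf.continuousOn_partial_left (by fun_prop) fun w hw => hw.1).mul
      (hcomp hg.continuousOn_partial_right (by fun_prop) fun w hw => hw.2.2.2)).sub
      ((hcomp hf.continuousOn_partial_right (by fun_prop) fun w hw => hw.2.1).mul
      (hcomp hg.continuousOn_partial_left (by fun_prop) fun w hw => hw.2.2.1)))
    (by fun_prop) hdiag
  refine ⟨ε / 3, by positivity, fun p₁ h₁ p₂ h₂ p₃ h₃ p₄ h₄ d₂ d₃ d₄ => ?_⟩
  exact sub_pos.mp (hN (p₁, p₂, p₃, p₄) ⟨h₁, h₂, h₃, h₄⟩ (by simp only [d]; linarith))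

theorem exists_step_g_lt_on_nullcline (hf : HasContinuousPartialsOnQuadrant f fu fv)
    (hg : HasContinuousPartialsOnQuadrant g gu gv)
    (hfu : ∀ u ∈ Ici (0:ℝ), ∀ v ∈ Ici (0:ℝ), fu u v < 0)
    (hfv : ∀ u ∈ Ici (0:ℝ), ∀ v ∈ Ici (0:ℝ), fv u v < 0)
    (hdet : ∀ u ∈ Ici (0:ℝ), ∀ v ∈ Ici (0:ℝ), fv u v * gu u v < fu u v * gv u v) (M V : ℝ) :
    ∃ σ > 0, ∀ v₁ ∈ Icc 0 V, ∀ v₂ ∈ Icc 0 V, ∀ u₁ ∈ Icc 0 M, ∀ u₂ ∈ Icc 0 M,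
      f u₁ v₁ = 0 → f u₂ v₂ = 0 → v₁ < v₂ → v₂ ≤ v₁ + σ → g u₂ v₂ < g u₁ v₁ := by
  obtain ⟨K, hK, hlip⟩ := exists_nullcline_lipschitz hf hfu hfv M V
  obtain ⟨ε, hε, hJ⟩ := exists_mixed_det_pos hf hg hdet (isCompact_Icc.prod isCompact_Icc)
    (prod_mono Icc_subset_Ici_self Icc_subset_Ici_self : Icc 0 M ×ˢ Icc 0 V ⊆ Ici 0 ×ˢ Ici 0)
  refine ⟨ε / (2 * (K + 1)), by positivity, ?_⟩
  intro v₁ hv₁ v₂ hv₂ u₁ hu₁ u₂ hu₂ h₁ h₂ hv hσ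
  have hu := lt_of_nullcline_of_lt hf hfu hfv hu₁.1 hu₂.1 hv₁.1 hv h₁ h₂
  obtain ⟨c, hc, d, hd, hfdiff⟩ := hf.exists_sub_eq hu₂.1 hu hv₁.1 hv
  obtain ⟨c', hc', d', hd', hgdiff⟩ := hg.exists_sub_eq hu₂.1 hu hv₁.1 hv
  rw [h₁, h₂] at hfdiff
  have hsmall : ∀ p ∈ Icc u₂ u₁ ×ˢ Icc v₁ v₂, ∀ q ∈ Icc u₂ u₁ ×ˢ Icc v₁ v₂, dist p q < ε := by
    have hside : max (u₁ - u₂) (v₂ - v₁) ≤ ε / 2 := by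
      have hlip := hlip u₁ hu₁ u₂ hu₂ v₁ hv₁ v₂ hv₂ h₁ h₂ hv
      have : (K + 1) * (v₂ - v₁) ≤ ε / 2 := by
        rw [← le_div_iff₀' (by positivity), div_div]; linarith
      refine max_le (by nlinarith) (by nlinarith)
    intro p hp q hq
    rw [Prod.dist_eq]
    exact (max_le_max (Real.dist_le_of_mem_Icc hp.1 hq.1)
      (Real.dist_le_of_mem_Icc hp.2 hq.2)).trans_lt (hside.trans_lt (half_lt_self hε))
  have hbox : Icc u₂ u₁ ×ˢ Icc v₁ v₂ ⊆ Icc 0 M ×ˢ Icc 0 V :=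
    prod_mono (Icc_subset_Icc hu₂.1 hu₁.2) (Icc_subset_Icc hv₁.1 hv₂.2)
  have hpc : (c, v₁) ∈ Icc u₂ u₁ ×ˢ Icc v₁ v₂ := ⟨Ioo_subset_Icc_self hc, le_rfl, hv.le⟩
  have hpd : (u₂, d) ∈ Icc u₂ u₁ ×ˢ Icc v₁ v₂ := ⟨⟨le_rfl, hu.le⟩, Ioo_subset_Icc_self hd⟩
  have hpc' : (c', v₁) ∈ Icc u₂ u₁ ×ˢ Icc v₁ v₂ := ⟨Ioo_subset_Icc_self hc', le_rfl, hv.le⟩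
  have hpd' : (u₂, d') ∈ Icc u₂ u₁ ×ˢ Icc v₁ v₂ := ⟨⟨le_rfl, hu.le⟩, Ioo_subset_Icc_self hd'⟩
  have hJpos := hJ _ (hbox hpc) _ (hbox hpd) _ (hbox hpc') _ (hbox hpd')
    (hsmall _ hpc _ hpd) (hsmall _ hpc _ hpc') (hsmall _ hpc _ hpd')
  -- the vanishing increment of `f` eliminates `u₁ - u₂` from the increment of `g`
  have hprod : fu c v₁ * (g u₂ v₂ - g u₁ v₁)
      = (v₂ - v₁) * (fu c v₁ * gv u₂ d' - fv u₂ d * gu c' v₁) := by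
    rw [hgdiff]; linear_combination (-gu c' v₁) * hfdiff
  have hfuc : fu c v₁ < 0 := hfu c (hu₂.1.trans hc.1.le) v₁ hv₁.1
  have := neg_of_mul_pos_right (hprod ▸ mul_pos (sub_pos.mpr hv) (sub_pos.mpr hJpos)) hfuc.le
  linarith

theorem f_zero_pos_of_g_lt (hf : HasContinuousPartialsOnQuadrant f fu fv)
    (hg : HasContinuousPartialsOnQuadrant g gu gv)
    (hfu : ∀ u ∈ Ici (0:ℝ), ∀ v ∈ Ici (0:ℝ), fu u v < 0)
    (hfv : ∀ u ∈ Ici (0:ℝ), ∀ v ∈ Ici (0:ℝ), fv u v < 0)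
    (hgv : ∀ u ∈ Ici (0:ℝ), ∀ v ∈ Ici (0:ℝ), gv u v < 0)
    (hdet : ∀ u ∈ Ici (0:ℝ), ∀ v ∈ Ici (0:ℝ), fv u v * gu u v < fu u v * gv u v)
    {M : ℝ} (hM : 0 < M) (hfM : ∀ v ∈ Ici (0:ℝ), f M v < 0) {a η : ℝ} (hη : 0 < η)
    (ha : f a 0 = 0) (hlt : g (max a 0) 0 < g 0 η) : 0 < f 0 η := by
  by_contra! hfη
  have hg₀ := hg.strictAntiOn_right hgv le_rfl
  rcases le_or_gt a 0 with ha₀ | ha₀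
  · rw [max_eq_right ha₀] at hlt
    exact (hg₀ self_mem_Ici hη.le hη).asymm hlt
  rw [max_eq_left ha₀.le] at hlt
  have hf₀ : 0 < f 0 0 := by
    simpa only [ha] using hf.strictAntiOn_left hfu le_rfl self_mem_Ici ha₀.le ha₀
  obtain ⟨V, hV, hfV⟩ : ∃ V ∈ Icc 0 η, f 0 V = 0 := intermediate_value_Icc' hη.le
    ((hf.continuousOn_right le_rfl).mono Icc_subset_Ici_self) ⟨hfη, hf₀.le⟩
  have hVpos : 0 < V := hV.1.lt_of_ne (by rintro rfl; linarith)
  have hnullcline : ∀ v ∈ Icc 0 V, ∃ u ∈ Icc 0 M, f u v = 0 := fun v hv =>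
    intermediate_value_Icc' hM.le ((hf.continuousOn_left hv.1).mono Icc_subset_Ici_self)
      ⟨(hfM v hv.1).le,
        hfV.symm.trans_le ((hf.strictAntiOn_right hfv le_rfl).antitoneOn hv.1 hV.1 hv.2)⟩
  choose! G hGmem hG using hnullcline
  have hG₀ : G 0 = a := (hf.strictAntiOn_left hfu le_rfl).injOn (hGmem 0 ⟨le_rfl, hV.1⟩).1
    ha₀.le ((hG 0 ⟨le_rfl, hV.1⟩).trans ha.symm)
  have hGV : G V = 0 := (hf.strictAntiOn_left hfu hV.1).injOn (hGmem V ⟨hV.1, le_rfl⟩).1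
    (le_refl (0:ℝ)) ((hG V ⟨hV.1, le_rfl⟩).trans hfV.symm)
  obtain ⟨σ, hσ, hstep⟩ := exists_step_g_lt_on_nullcline hf hg hfu hfv hdet M V
  have hanti : StrictAntiOn (fun v => g (G v) v) (Icc 0 V) :=
    strictAntiOn_of_forall_lt_le_add hσ fun v₁ hv₁ v₂ hv₂ =>
      hstep v₁ hv₁ v₂ hv₂ _ (hGmem v₁ hv₁) _ (hGmem v₂ hv₂) (hG v₁ hv₁) (hG v₂ hv₂)
  have hgV : g 0 V < g a 0 := by
    simpa only [hG₀, hGV] using hanti ⟨le_rfl, hV.1⟩ ⟨hV.1, le_rfl⟩ hVpos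
  have hgη : g 0 η ≤ g 0 V := hg₀.antitoneOn hV.1 (hV.1.trans hV.2) hV.2
  linarith

end Nullcline

theorem stmt_14_general
    {n : ℕ}
    (Ω : Set (Fin n → ℝ)) (hΩb : Bornology.IsBounded Ω)
    (p : (Fin n → ℝ) → (Fin n → ℝ) → ℝ)
    (f g fu fv gu gv : (Fin n → ℝ) → ℝ → ℝ → ℝ)
    (hdfu : ∀ x ∈ closure Ω, ∀ u ∈ Set.Ici (0:ℝ), ∀ v ∈ Set.Ici (0:ℝ),
      HasDerivWithinAt (fun s => f x s v) (fu x u v) (Set.Ici 0) u)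
    (hdfv : ∀ x ∈ closure Ω, ∀ u ∈ Set.Ici (0:ℝ), ∀ v ∈ Set.Ici (0:ℝ),
      HasDerivWithinAt (fun s => f x u s) (fv x u v) (Set.Ici 0) v)
    (hdgu : ∀ x ∈ closure Ω, ∀ u ∈ Set.Ici (0:ℝ), ∀ v ∈ Set.Ici (0:ℝ),
      HasDerivWithinAt (fun s => g x s v) (gu x u v) (Set.Ici 0) u)
    (hdgv : ∀ x ∈ closure Ω, ∀ u ∈ Set.Ici (0:ℝ), ∀ v ∈ Set.Ici (0:ℝ),
      HasDerivWithinAt (fun s => g x u s) (gv x u v) (Set.Ici 0) v)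
    (hfcont : ContinuousOn (fun q : (Fin n → ℝ) × ℝ × ℝ => f q.1 q.2.1 q.2.2)
      ((closure Ω) ×ˢ (Set.Ici 0 ×ˢ Set.Ici 0)))
    (hfucont : ContinuousOn (fun q : (Fin n → ℝ) × ℝ × ℝ => fu q.1 q.2.1 q.2.2)
      ((closure Ω) ×ˢ (Set.Ici 0 ×ˢ Set.Ici 0)))
    (hfvcont : ContinuousOn (fun q : (Fin n → ℝ) × ℝ × ℝ => fv q.1 q.2.1 q.2.2)
      ((closure Ω) ×ˢ (Set.Ici 0 ×ˢ Set.Ici 0)))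
    (hgucont : ContinuousOn (fun q : (Fin n → ℝ) × ℝ × ℝ => gu q.1 q.2.1 q.2.2)
      ((closure Ω) ×ˢ (Set.Ici 0 ×ˢ Set.Ici 0)))
    (hgvcont : ContinuousOn (fun q : (Fin n → ℝ) × ℝ × ℝ => gv q.1 q.2.1 q.2.2)
      ((closure Ω) ×ˢ (Set.Ici 0 ×ˢ Set.Ici 0)))
    (hA2 : ∀ x ∈ closure Ω, ∀ u ∈ Set.Ici (0:ℝ), ∀ v ∈ Set.Ici (0:ℝ),
      fu x u v < 0 ∧ gv x u v < 0)
    (hA3 : ∀ x ∈ closure Ω, ∀ u ∈ Set.Ici (0:ℝ), ∀ v ∈ Set.Ici (0:ℝ),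
      fv x u v < 0 ∧ gu x u v < 0)
    (M : ℝ) (hM : 0 < M)
    (hA4 : ∀ x ∈ closure Ω, ∀ u ∈ Set.Ici (0:ℝ), ∀ v ∈ Set.Ici (0:ℝ),
      (M ≤ u → f x u v < 0) ∧ (M ≤ v → g x u v < 0))
    (hA5 : ∀ x ∈ closure Ω, ∀ u ∈ Set.Ici (0:ℝ), ∀ v ∈ Set.Ici (0:ℝ),
      fv x u v * gu x u v < fu x u v * gv x u v)
    (F : (Fin n → ℝ) → ℝ → ℝ)
    (hF : ∀ x ∈ closure Ω, ∀ v ∈ Set.Ici (0:ℝ), f x (F x v) v = 0)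
    (D : ℝ)
    (μ₀ : ℝ)
    (hchar : μ₀ = sSup {r : ℝ | ∃ φ : (Fin n → ℝ) → ℝ, ContinuousOn φ (closure Ω) ∧
      (∀ x ∈ closure Ω, 0 < φ x) ∧
      r = sInf ((fun x => (D * ((∫ y in Ω, p x y * φ y) - φ x)
        + g x (max (F x 0) 0) 0 * φ x) / φ x) '' Ω)})
    (ηD : (Fin n → ℝ) → ℝ)
    (hηc : ContinuousOn ηD (closure Ω)) (hηpos : ∀ x ∈ closure Ω, 0 < ηD x)
    (hηeq : ∀ x ∈ closure Ω,
      D * ((∫ y in Ω, p x y * ηD y) - ηD x) + ηD x * g x 0 (ηD x) = 0)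
    (hμneg : μ₀ < 0) :
    0 < sSup ((fun x => f x 0 (ηD x)) '' closure Ω) := by
  obtain ⟨_, ⟨x₀, hx₀, rfl⟩, hquot⟩ := Real.exists_neg_of_sInf_neg <|
    Real.forall_neg_of_sSup_neg (hchar ▸ hμneg) _ (mem_ofPred.mpr ⟨ηD, hηc, hηpos, rfl⟩)
  have hx₀c := subset_closure hx₀
  have hη₀ := hηpos x₀ hx₀c
  have hglt : g x₀ (max (F x₀ 0) 0) 0 < g x₀ 0 (ηD x₀) := by
    have := (div_lt_iff₀ hη₀).mp hquot
    exact lt_of_mul_lt_mul_right (by linarith [hηeq x₀ hx₀c]) hη₀.le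
  have hpos : 0 < f x₀ 0 (ηD x₀) :=
    f_zero_pos_of_g_lt ⟨hdfu x₀ hx₀c, hdfv x₀ hx₀c, hfucont.slice hx₀c, hfvcont.slice hx₀c⟩
      ⟨hdgu x₀ hx₀c, hdgv x₀ hx₀c, hgucont.slice hx₀c, hgvcont.slice hx₀c⟩
      (fun u hu v hv => (hA2 x₀ hx₀c u hu v hv).1) (fun u hu v hv => (hA3 x₀ hx₀c u hu v hv).1)
      (fun u hu v hv => (hA2 x₀ hx₀c u hu v hv).2) (hA5 x₀ hx₀c) hM
      (fun v hv => (hA4 x₀ hx₀c M hM.le v hv).1 le_rfl) hη₀ (hF x₀ hx₀c 0 self_mem_Ici) hglt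
  have hcont : ContinuousOn (fun x => f x 0 (ηD x)) (closure Ω) :=
    hfcont.comp (continuousOn_id.prodMk (continuousOn_const.prodMk hηc))
      fun x hx => ⟨hx, self_mem_Ici, (hηpos x hx).le⟩
  exact hpos.trans_le
    (le_csSup (hΩb.isCompact_closure.image_of_continuousOn hcont).bddAbove ⟨x₀, hx₀c, rfl⟩)

theorem stmt_14
    {n : ℕ} (hn : 1 ≤ n)
    (Ω : Set (Fin n → ℝ)) (hΩo : IsOpen Ω) (hΩb : Bornology.IsBounded Ω)
    (hΩc : IsConnected Ω)
    (p : (Fin n → ℝ) → (Fin n → ℝ) → ℝ)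
    (hpc : Continuous (Function.uncurry p)) (hpnn : ∀ x y, 0 ≤ p x y)
    (hpd : ∀ x, 0 < p x x)
    (hp1 : ∀ x, (∫ y, p x y) = 1) (hp2 : ∀ x, (∫ y, p y x) = 1)
    (f g fu fv gu gv : (Fin n → ℝ) → ℝ → ℝ → ℝ)
    (hdfu : ∀ x ∈ closure Ω, ∀ u ∈ Set.Ici (0:ℝ), ∀ v ∈ Set.Ici (0:ℝ),
      HasDerivWithinAt (fun s => f x s v) (fu x u v) (Set.Ici 0) u)
    (hdfv : ∀ x ∈ closure Ω, ∀ u ∈ Set.Ici (0:ℝ), ∀ v ∈ Set.Ici (0:ℝ),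
      HasDerivWithinAt (fun s => f x u s) (fv x u v) (Set.Ici 0) v)
    (hdgu : ∀ x ∈ closure Ω, ∀ u ∈ Set.Ici (0:ℝ), ∀ v ∈ Set.Ici (0:ℝ),
      HasDerivWithinAt (fun s => g x s v) (gu x u v) (Set.Ici 0) u)
    (hdgv : ∀ x ∈ closure Ω, ∀ u ∈ Set.Ici (0:ℝ), ∀ v ∈ Set.Ici (0:ℝ),
      HasDerivWithinAt (fun s => g x u s) (gv x u v) (Set.Ici 0) v)
    (hfcont : ContinuousOn (fun q : (Fin n → ℝ) × ℝ × ℝ => f q.1 q.2.1 q.2.2)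
      ((closure Ω) ×ˢ (Set.Ici 0 ×ˢ Set.Ici 0)))
    (hgcont : ContinuousOn (fun q : (Fin n → ℝ) × ℝ × ℝ => g q.1 q.2.1 q.2.2)
      ((closure Ω) ×ˢ (Set.Ici 0 ×ˢ Set.Ici 0)))
    (hfucont : ContinuousOn (fun q : (Fin n → ℝ) × ℝ × ℝ => fu q.1 q.2.1 q.2.2)
      ((closure Ω) ×ˢ (Set.Ici 0 ×ˢ Set.Ici 0)))
    (hfvcont : ContinuousOn (fun q : (Fin n → ℝ) × ℝ × ℝ => fv q.1 q.2.1 q.2.2)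
      ((closure Ω) ×ˢ (Set.Ici 0 ×ˢ Set.Ici 0)))
    (hgucont : ContinuousOn (fun q : (Fin n → ℝ) × ℝ × ℝ => gu q.1 q.2.1 q.2.2)
      ((closure Ω) ×ˢ (Set.Ici 0 ×ˢ Set.Ici 0)))
    (hgvcont : ContinuousOn (fun q : (Fin n → ℝ) × ℝ × ℝ => gv q.1 q.2.1 q.2.2)
      ((closure Ω) ×ˢ (Set.Ici 0 ×ˢ Set.Ici 0)))
    (hA2 : ∀ x ∈ closure Ω, ∀ u ∈ Set.Ici (0:ℝ), ∀ v ∈ Set.Ici (0:ℝ),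
      fu x u v < 0 ∧ gv x u v < 0)
    (hA3 : ∀ x ∈ closure Ω, ∀ u ∈ Set.Ici (0:ℝ), ∀ v ∈ Set.Ici (0:ℝ),
      fv x u v < 0 ∧ gu x u v < 0)
    (M : ℝ) (hM : 0 < M)
    (hA4 : ∀ x ∈ closure Ω, ∀ u ∈ Set.Ici (0:ℝ), ∀ v ∈ Set.Ici (0:ℝ),
      (M ≤ u → f x u v < 0) ∧ (M ≤ v → g x u v < 0))
    (hA5 : ∀ x ∈ closure Ω, ∀ u ∈ Set.Ici (0:ℝ), ∀ v ∈ Set.Ici (0:ℝ),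
      fv x u v * gu x u v < fu x u v * gv x u v)
    (F : (Fin n → ℝ) → ℝ → ℝ)
    (hFcont : ContinuousOn (fun q : (Fin n → ℝ) × ℝ => F q.1 q.2) ((closure Ω) ×ˢ Set.Ici 0))
    (hF : ∀ x ∈ closure Ω, ∀ v ∈ Set.Ici (0:ℝ), f x (F x v) v = 0)
    (D : ℝ) (hD : 0 < D)
    (T : (↥(closure Ω) →ᵇ ℂ) →L[ℂ] (↥(closure Ω) →ᵇ ℂ))
    (hT : ∀ (φ : ((Fin n → ℝ) →ᵇ ℂ)) (x : ↥(closure Ω)),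
      T (φ.compContinuous (ContinuousMap.mk Subtype.val continuous_subtype_val)) x
        = (D : ℂ) * ((∫ y in Ω, (p x.1 y : ℂ) * φ y) - φ x.1)
          + ((g x.1 (max (F x.1 0) 0) 0 : ℝ) : ℂ) * φ x.1)
    (μ₀ : ℝ) (hμ₀ : μ₀ = sSup (Complex.re '' spectrum ℂ T))
    (hchar : μ₀ = sSup {r : ℝ | ∃ φ : (Fin n → ℝ) → ℝ, ContinuousOn φ (closure Ω) ∧
      (∀ x ∈ closure Ω, 0 < φ x) ∧
      r = sInf ((fun x => (D * ((∫ y in Ω, p x y * φ y) - φ x)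
        + g x (max (F x 0) 0) 0 * φ x) / φ x) '' Ω)})
    (ηD : (Fin n → ℝ) → ℝ)
    (hηc : ContinuousOn ηD (closure Ω)) (hηpos : ∀ x ∈ closure Ω, 0 < ηD x)
    (hηeq : ∀ x ∈ closure Ω,
      D * ((∫ y in Ω, p x y * ηD y) - ηD x) + ηD x * g x 0 (ηD x) = 0)
    (hμneg : μ₀ < 0) :
    0 < sSup ((fun x => f x 0 (ηD x)) '' closure Ω) :=
  stmt_14_general Ω hΩb p f g fu fv gu gv hdfu hdfv hdgu hdgv hfcont hfucont hfvcont hgucont hgvcont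
    hA2 hA3 M hM hA4 hA5 F hF D μ₀ hchar ηD hηc hηpos hηeq hμneg
end
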